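/- arXiv:1605.01119 — 13 statements merged into one kernel-verified Lean document; each statement's English description precedes it below -/
import Mathlib

section
/- Let (X, B, μ) be a probability space and let (E_i) be a sequence of measurable sets with μ(E_i) ≥ a > 0 for all i. Then for every k ≥ 1 and ε > 0 there exists N = N(a,k,ε) such that any collection of at least N of the sets E_i contains k sets whose intersection has measure at least a^k − ε. -/
/-!
Put `n = #s` and `g = ∑ i ∈ s, 𝟙_{E i}`. Jensen's inequality gives
`(n a)^k ≤ (∫ g)^k ≤ ∫ g^k = ∑_{w : Fin k → s} μ(⋂ j, E (w j))`.
Each of the `n.descFactorial k` injective tuples `w` contributes at most the largest measure `m`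
of an intersection of `k` of the sets, and each of the at most `k² n^(k-1)` remaining tuples
at most `1`. Hence `a^k ≤ m + k²/n`, and `k²/n ≤ ε` once `n ≥ k²/ε`.
-/

open MeasureTheory Finset Function

theorem Nat.pow_le_descFactorial_add (n : ℕ) : ∀ k, n ^ k ≤ n.descFactorial k + k ^ 2 * n ^ (k - 1)
  | 0 => by simp
  | 1 => by simp
  | k + 2 => by
    have ih := Nat.pow_le_descFactorial_add n (k + 1)
    have hd : n * n.descFactorial (k + 1) ≤ n.descFactorial (k + 2) + (k + 1) * n ^ (k + 1) := by
      rw [Nat.descFactorial_succ]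
      calc n * n.descFactorial (k + 1)
          ≤ (n - (k + 1) + (k + 1)) * n.descFactorial (k + 1) := by gcongr; omega
        _ = (n - (k + 1)) * n.descFactorial (k + 1) + (k + 1) * n.descFactorial (k + 1) :=
          add_mul ..
        _ ≤ (n - (k + 1)) * n.descFactorial (k + 1) + (k + 1) * n ^ (k + 1) := by
          gcongr; exact Nat.descFactorial_le_pow ..
    rw [Nat.add_sub_cancel] at ih
    calc n ^ (k + 2) = n * n ^ (k + 1) := _root_.pow_succ' ..
      _ ≤ n * (n.descFactorial (k + 1) + (k + 1) ^ 2 * n ^ k) := Nat.mul_le_mul_left _ ih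
      _ = n * n.descFactorial (k + 1) + (k + 1) ^ 2 * n ^ (k + 1) := by ring
      _ ≤ n.descFactorial (k + 2) + (k + 2) ^ 2 * n ^ (k + 2 - 1) := by
        rw [show k + 2 - 1 = k + 1 by omega]; nlinarith [Nat.zero_le (n ^ (k + 1))]

theorem Fintype.card_filter_not_injective_le (α : Type*) [Fintype α] [DecidableEq α] (k : ℕ) :
    #{w : Fin k → α | ¬Injective w} ≤ k ^ 2 * Fintype.card α ^ (k - 1) := by
  have hsplit := card_filter_add_card_filter_not (s := (univ : Finset (Fin k → α))) Injective
  have hinj : #{w : Fin k → α | Injective w} = (Fintype.card α).descFactorial k := by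
    rw [← Fintype.card_subtype, Fintype.card_congr (Equiv.subtypeInjectiveEquivEmbedding _ _),
      Fintype.card_embedding_eq, Fintype.card_fin]
  rw [card_univ, Fintype.card_fun, Fintype.card_fin, hinj] at hsplit
  have := Nat.pow_le_descFactorial_add (Fintype.card α) k
  omega

theorem sum_indicator_one_pow {X ι : Type*} [Fintype ι] (F : ι → Set X) (k : ℕ) (x : X) :
    (∑ i, (F i).indicator (1 : X → ℝ) x) ^ k = ∑ w : Fin k → ι, (⋂ j, F (w j)).indicator 1 x := by
  simp [Fintype.sum_pow, prod_indicator_const_apply]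

section

variable {X : Type*} [MeasurableSpace X]

theorem pow_integral_le_integral_pow (μ : Measure X) [IsProbabilityMeasure μ] {f : X → ℝ}
    (hf_nonneg : 0 ≤ᵐ[μ] f) (hf : Integrable f μ) (k : ℕ) (hfk : Integrable (fun x ↦ f x ^ k) μ) :
    (∫ x, f x ∂μ) ^ k ≤ ∫ x, f x ^ k ∂μ :=
  (convexOn_pow k).map_integral_le (continuous_pow k).continuousOn isClosed_Ici hf_nonneg hf hfk

theorem integral_sum_indicator_one_pow {ι : Type*} [Fintype ι] (μ : Measure X) [IsFiniteMeasure μ]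
    {F : ι → Set X} (hF : ∀ i, MeasurableSet (F i)) (k : ℕ) :
    ∫ x, (∑ i, (F i).indicator (1 : X → ℝ) x) ^ k ∂μ = ∑ w : Fin k → ι, μ.real (⋂ j, F (w j)) := by
  have hmeas (w : Fin k → ι) : MeasurableSet (⋂ j, F (w j)) := .iInter fun j ↦ hF (w j)
  simp_rw [sum_indicator_one_pow]
  rw [integral_finsetSum _ fun w _ ↦ (integrable_const 1).indicator (hmeas w)]
  exact sum_congr rfl fun w _ ↦ integral_indicator_one (hmeas w)

theorem pow_card_mul_le_sum_measureReal_iInter {ι : Type*} [Fintype ι] (μ : Measure X)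
    [IsProbabilityMeasure μ] {F : ι → Set X} (hF : ∀ i, MeasurableSet (F i)) {a : ℝ} (ha : 0 ≤ a)
    (haF : ∀ i, a ≤ μ.real (F i)) (k : ℕ) :
    (Fintype.card ι * a) ^ k ≤ ∑ w : Fin k → ι, μ.real (⋂ j, F (w j)) := by
  set g : X → ℝ := fun x ↦ ∑ i, (F i).indicator 1 x
  have hind {S : Set X} (hS : MeasurableSet S) : Integrable (S.indicator (1 : X → ℝ)) μ :=
    (integrable_const 1).indicator hS
  have hg : Integrable g μ := integrable_finsetSum _ fun i _ ↦ hind (hF i)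
  have hgk : Integrable (fun x ↦ g x ^ k) μ := by
    simp_rw [g, sum_indicator_one_pow]
    exact integrable_finsetSum _ fun w _ ↦ hind (.iInter fun j ↦ hF (w j))
  have hmean : Fintype.card ι * a ≤ ∫ x, g x ∂μ := by
    rw [integral_finsetSum _ fun i _ ↦ hind (hF i)]
    simp_rw [integral_indicator_one (hF _)]
    calc Fintype.card ι * a = ∑ _i : ι, a := by simp
      _ ≤ ∑ i, μ.real (F i) := sum_le_sum fun i _ ↦ haF i
  calc (Fintype.card ι * a) ^ k ≤ (∫ x, g x ∂μ) ^ k := pow_le_pow_left₀ (by positivity) hmean k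
    _ ≤ ∫ x, g x ^ k ∂μ := pow_integral_le_integral_pow μ
        (ae_of_all _ fun x ↦ sum_nonneg fun i _ ↦ Set.indicator_nonneg (fun _ _ ↦ zero_le_one) x)
        hg k hgk
    _ = ∑ w : Fin k → ι, μ.real (⋂ j, F (w j)) := integral_sum_indicator_one_pow μ hF k

theorem exists_subset_card_eq_pow_sub_le_measureReal_biInter {ι : Type*} (μ : Measure X)
    [IsProbabilityMeasure μ] {E : ι → Set X} {s : Finset ι} (hE : ∀ i ∈ s, MeasurableSet (E i))
    {a : ℝ} (ha : 0 ≤ a) (haE : ∀ i ∈ s, a ≤ μ.real (E i)) {k : ℕ} (hk : k ≤ #s) :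
    ∃ t ⊆ s, #t = k ∧ a ^ k - (k : ℝ) ^ 2 / #s ≤ μ.real (⋂ i ∈ t, E i) := by
  classical
  obtain ⟨t, ht, hmax⟩ := (powersetCard k s).exists_max_image (fun t ↦ μ.real (⋂ i ∈ t, E i))
    (powersetCard_nonempty.2 hk)
  rw [mem_powersetCard] at ht
  refine ⟨t, ht.1, ht.2, ?_⟩
  set m := μ.real (⋂ i ∈ t, E i)
  set n := #s
  have hinj (w : Fin k → s) (hw : Injective w) : μ.real (⋂ j, E (w j)) ≤ m := by
    have hw' : Injective fun j ↦ (w j : ι) := Subtype.val_injective.comp hw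
    have := hmax (univ.image fun j ↦ (w j : ι)) <| mem_powersetCard.2
      ⟨fun i hi ↦ by obtain ⟨j, -, rfl⟩ := mem_image.1 hi; exact (w j).2,
        by rw [card_image_of_injective _ hw', card_univ, Fintype.card_fin]⟩
    simpa using this
  have hmoment : (n * a) ^ k ≤ n ^ k * m + k ^ 2 * n ^ (k - 1) :=
    calc (n * a) ^ k ≤ ∑ w : Fin k → s, μ.real (⋂ j, E (w j)) := by
          simpa [n] using pow_card_mul_le_sum_measureReal_iInter μ (F := fun i : s ↦ E i)
            (fun i ↦ hE i i.2) ha (fun i ↦ haE i i.2) k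
      _ ≤ ∑ w : Fin k → s, (m + if ¬Injective w then 1 else 0) := by
          refine sum_le_sum fun w _ ↦ ?_
          split_ifs with hw
          · simpa using hinj w hw
          · linarith [measureReal_le_one (μ := μ) (s := ⋂ j, E (w j)),
              measureReal_nonneg (μ := μ) (s := ⋂ i ∈ t, E i)]
      _ = n ^ k * m + #{w : Fin k → s | ¬Injective w} := by
          rw [sum_add_distrib, sum_boole]; simp [n]
      _ ≤ n ^ k * m + k ^ 2 * n ^ (k - 1) := by
          gcongr
          exact_mod_cast (Fintype.card_coe s ▸ Fintype.card_filter_not_injective_le s k)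
  rcases Nat.eq_zero_or_pos k with rfl | hk0
  · simpa using hmoment
  have hn : 0 < (n : ℝ) := by exact_mod_cast hk0.trans_le hk
  have hpow : (n : ℝ) ^ k * (k ^ 2 / n) = k ^ 2 * n ^ (k - 1) := by
    rw [← pow_sub_one_mul hk0.ne']
    field_simp
  refine le_of_mul_le_mul_left ?_ (pow_pos hn k)
  rw [mul_sub, hpow, ← mul_pow]
  linarith

end

theorem gillis_general {X : Type*} [MeasurableSpace X] (μ : Measure X) [IsProbabilityMeasure μ]
    (E : ℕ → Set X) (hE : ∀ i, MeasurableSet (E i))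
    (a : ℝ) (ha : 0 < a) (haE : ∀ i, a ≤ (μ (E i)).toReal)
    (k : ℕ) (ε : ℝ) (hε : 0 < ε) :
    ∃ N : ℕ, ∀ s : Finset ℕ, N ≤ s.card →
      ∃ t ⊆ s, t.card = k ∧ a ^ k - ε ≤ (μ (⋂ i ∈ t, E i)).toReal := by
  obtain ⟨M, hM⟩ := exists_nat_ge ((k : ℝ) ^ 2 / ε)
  refine ⟨k + M, fun s hs ↦ ?_⟩
  obtain ⟨t, hts, htk, ht⟩ := exists_subset_card_eq_pow_sub_le_measureReal_biInter μ
    (fun i _ ↦ hE i) ha.le (fun i _ ↦ haE i) (show k ≤ #s by omega)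
  have hMs : (M : ℝ) ≤ #s := by exact_mod_cast (Nat.le_add_left M k).trans hs
  have hsmall : (k : ℝ) ^ 2 / #s ≤ ε :=
    div_le_of_le_mul₀ (Nat.cast_nonneg _) hε.le <| by
      rw [div_le_iff₀ hε] at hM
      nlinarith
  exact ⟨t, hts, htk, (sub_le_sub_left hsmall _).trans ht⟩

/-- Gillis's lemma: if `(E i)` are measurable sets of measure at least `a > 0` in a
probability space, then for every `k ≥ 1` and `ε > 0` there is `N` such that among any
`N` of the sets one can find `k` whose intersection has measure at least `a^k - ε`. -/
theorem gillis {X : Type*} [MeasurableSpace X] (μ : Measure X) [IsProbabilityMeasure μ]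
    (E : ℕ → Set X) (hE : ∀ i, MeasurableSet (E i))
    (a : ℝ) (ha : 0 < a) (haE : ∀ i, a ≤ (μ (E i)).toReal)
    (k : ℕ) (hk : 1 ≤ k) (ε : ℝ) (hε : 0 < ε) :
    ∃ N : ℕ, ∀ s : Finset ℕ, N ≤ s.card →
      ∃ t ⊆ s, t.card = k ∧ a ^ k - ε ≤ (μ (⋂ i ∈ t, E i)).toReal :=
  gillis_general μ E hE a ha haE k ε hε
end

section
/- Let (X,T) be a topological dynamical system with an invariant Borel probability measure μ, and let U be a Borel set with a = μ(U) > 0. Then there exists n = n(a) ∈ ℕ such that for every finite IP-set FS({p_i}_{i=1}^n) generated by n positive integers, there exists q ∈ FS({p_i}_{i=1}^n) with μ(U ∩ T^{−q}U) ≥ a²/2. -/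
/-!
Put `n = ⌊2/a⌋` and let `s₀ = 0, s₁, …, sₙ` be the partial sums of `p₁, …, pₙ`. The `n + 1`
sets `T^{-s_k} U` all have measure `a`, and by invariance
`μ (T^{-s_j} U ∩ T^{-s_k} U) = μ (U ∩ T^{-q} U)` with `q = s_k - s_j = p_{j+1} + ⋯ + p_k`,
an element of `FS(p)`. If all these were `< a²/2`, the second Bonferroni inequality in a
probability space would give `(n + 1) a ≤ 1 + (n + 1) n a² / 4`, which fails because
`2 < (n + 1) a ≤ 2 + a`.
-/

open MeasureTheory Finset

namespace MeasureTheory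

variable {X : Type*} [MeasurableSpace X] {μ : Measure X}

theorem sum_measureReal_le_measureReal_biUnion_add_sum_inter [IsFiniteMeasure μ] {A : ℕ → Set X}
    (hA : ∀ k, MeasurableSet (A k)) (m : ℕ) :
    ∑ k ∈ range m, μ.real (A k) ≤
      μ.real (⋃ k ∈ range m, A k) + ∑ k ∈ range m, ∑ j ∈ range k, μ.real (A j ∩ A k) := by
  induction m with
  | zero => simp
  | succ m ih =>
    have hunion : ⋃ k ∈ range (m + 1), A k = (⋃ k ∈ range m, A k) ∪ A m := by
      simp [range_add_one, Set.union_comm]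
    have hinter : μ.real ((⋃ k ∈ range m, A k) ∩ A m) ≤ ∑ j ∈ range m, μ.real (A j ∩ A m) := by
      rw [Set.iUnion₂_inter]
      exact measureReal_biUnion_finset_le _ _
    have hsplit :=
      measureReal_union_add_inter (μ := μ) (s := ⋃ k ∈ range m, A k) (hA m) (measure_ne_top _ _)
    rw [sum_range_succ, sum_range_succ, hunion]
    linarith

theorem card_mul_le_one_add_of_measureReal_inter_le [IsProbabilityMeasure μ] {A : ℕ → Set X}
    (hA : ∀ k, MeasurableSet (A k)) {N : ℕ} {a b : ℝ} (ha : ∀ k < N, a ≤ μ.real (A k))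
    (hb : ∀ j k, j < k → k < N → μ.real (A j ∩ A k) ≤ b) :
    N * a ≤ 1 + N * (N - 1) / 2 * b := by
  have hpairs : ∑ k ∈ range N, ∑ j ∈ range k, μ.real (A j ∩ A k) ≤ ∑ k ∈ range N, (k : ℝ) * b :=
    sum_le_sum fun k hk => by
      simpa using sum_le_sum fun j hj => hb j k (mem_range.1 hj) (mem_range.1 hk)
  have hgauss : ∀ M : ℕ, ∑ k ∈ range M, (k : ℝ) = M * (M - 1) / 2 := by
    intro M
    induction M with
    | zero => simp
    | succ M ih => rw [sum_range_succ, ih]; push_cast; ring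
  have hsingles : N * a ≤ ∑ k ∈ range N, μ.real (A k) := by
    simpa using sum_le_sum fun k hk => ha k (mem_range.1 hk)
  have hbonferroni := sum_measureReal_le_measureReal_biUnion_add_sum_inter (μ := μ) hA N
  rw [← sum_mul, hgauss] at hpairs
  linarith [measureReal_le_one (μ := μ) (s := ⋃ k ∈ range N, A k)]

theorem MeasurePreserving.measureReal_iterate_preimage_inter {f : X → X}
    (hf : MeasurePreserving f μ μ) {U : Set X} (hU : MeasurableSet U) (m d : ℕ) :
    μ.real (f^[m] ⁻¹' U ∩ f^[d + m] ⁻¹' U) = μ.real (U ∩ f^[d] ⁻¹' U) := by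
  rw [Function.iterate_add, Set.preimage_comp, ← Set.preimage_inter,
    (hf.iterate m).measureReal_preimage (hU.inter (hf.measurable.iterate d hU)).nullMeasurableSet]

end MeasureTheory

theorem one_add_mul_sq_lt_of_floor {a : ℝ} (ha : 0 < a) :
    1 + (⌊2 / a⌋₊ + 1) * ⌊2 / a⌋₊ / 2 * (a ^ 2 / 2) < (⌊2 / a⌋₊ + 1) * a := by
  set n := ⌊2 / a⌋₊
  have hlow : 2 < (n + 1) * a := (div_lt_iff₀ ha).1 (Nat.lt_floor_add_one _)
  have hhigh : n * a ≤ 2 := (le_div_iff₀ ha).1 (Nat.floor_le (by positivity))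
  -- `4 · (rhs - lhs) = 2a + ((n+1)a - 2)(2 - na)`
  nlinarith [mul_nonneg (sub_nonneg.2 hlow.le) (sub_nonneg.2 hhigh)]

theorem Fin.exists_nonempty_sum_filter_lt_eq_add {n : ℕ} (p : Fin n → ℕ) {j k : ℕ} (hjk : j < k)
    (hk : k ≤ n) : ∃ α : Finset (Fin n), α.Nonempty ∧
      ∑ i : Fin n with i.val < k, p i = ∑ i ∈ α, p i + ∑ i : Fin n with i.val < j, p i := by
  refine ⟨univ.filter (fun i : Fin n => i.val < k) \ univ.filter (fun i => i.val < j),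
    ⟨⟨j, by omega⟩, by simp [hjk]⟩, (sum_sdiff fun i => ?_).symm⟩
  simp only [mem_filter, mem_univ, true_and]
  omega

theorem finite_ip_return_general {X : Type*} [MetricSpace X]
    [MeasurableSpace X] [BorelSpace X]
    (T : X → X) (hT : Continuous T)
    (μ : Measure X) [IsProbabilityMeasure μ]
    (hinv : ∀ A : Set X, MeasurableSet A → μ (T ⁻¹' A) = μ A)
    (U : Set X) (hU : MeasurableSet U) (a : ℝ) (ha : 0 < a) (haU : (μ U).toReal = a) :
    ∃ n : ℕ, ∀ p : Fin n → ℕ, (∀ i, 0 < p i) →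
      ∃ α : Finset (Fin n), α.Nonempty ∧
        a ^ 2 / 2 ≤ (μ (U ∩ (fun x => T^[∑ i ∈ α, p i] x) ⁻¹' U)).toReal := by
  have hTμ : MeasurePreserving T μ μ :=
    ⟨hT.measurable, Measure.ext fun s hs => by rw [Measure.map_apply hT.measurable hs, hinv s hs]⟩
  refine ⟨⌊2 / a⌋₊, fun p _ => ?_⟩
  by_contra! hsmall
  set A : ℕ → Set X := fun k => T^[∑ i : Fin ⌊2 / a⌋₊ with i.val < k, p i] ⁻¹' U
  have hA : ∀ k, MeasurableSet (A k) := fun k => hT.measurable.iterate _ hU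
  have hAa : ∀ k, a ≤ μ.real (A k) := fun k =>
    ((hTμ.iterate _).measureReal_preimage hU.nullMeasurableSet).trans haU |>.ge
  have hpair : ∀ j k, j < k → k < ⌊2 / a⌋₊ + 1 → μ.real (A j ∩ A k) ≤ a ^ 2 / 2 := by
    intro j k hjk hk
    obtain ⟨α, hα, hsum⟩ := Fin.exists_nonempty_sum_filter_lt_eq_add p hjk (by omega)
    simp only [A]
    rw [hsum, hTμ.measureReal_iterate_preimage_inter hU]
    exact (hsmall α hα).le
  have hbonferroni := card_mul_le_one_add_of_measureReal_inter_le hA (fun k _ => hAa k) hpair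
  push_cast at hbonferroni
  linarith [one_add_mul_sq_lt_of_floor ha]

/-- Let `(X,T)` be a t.d.s. with invariant Borel probability measure `μ` and `U` a Borel
set with `μ U = a > 0`. There is `n = n(a)` such that for every finite IP-set generated by
`n` positive integers, some element `q` of it satisfies `μ (U ∩ T⁻¹^[q] U) ≥ a²/2`. -/
theorem finite_ip_return {X : Type*} [MetricSpace X] [CompactSpace X]
    [MeasurableSpace X] [BorelSpace X]
    (T : X → X) (hT : Continuous T) (hTs : Function.Surjective T)
    (μ : Measure X) [IsProbabilityMeasure μ]
    (hinv : ∀ A : Set X, MeasurableSet A → μ (T ⁻¹' A) = μ A)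
    (U : Set X) (hU : MeasurableSet U) (a : ℝ) (ha : 0 < a) (haU : (μ U).toReal = a) :
    ∃ n : ℕ, ∀ p : Fin n → ℕ, (∀ i, 0 < p i) →
      ∃ α : Finset (Fin n), α.Nonempty ∧
        a ^ 2 / 2 ≤ (μ (U ∩ (fun x => T^[∑ i ∈ α, p i] x) ⁻¹' U)).toReal :=
  finite_ip_return_general T hT μ hinv U hU a ha haU
end

section
/- If F is a finite IP-set of length n and F = F₁ ∪ F₂, then one of F₁, F₂ contains a finite IP-set of length l(n), where l(n) → ∞ as n → ∞. Consequently, the family of sets containing arbitrarily long finite IP-sets has the Ramsey property. -/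
/-!
Split `FS(p)` by colouring each nonempty `α ⊆ {1, …, n}` with the piece containing `∑ i ∈ α, p i`.
A family `β₁, …, β_L` of pairwise disjoint nonempty sets whose nonempty unions all get the same
colour gives `q j = ∑ i ∈ β j, p i` with `FS(q)` inside one piece, so it suffices to have
Folkman's finite unions theorem for colourings of the subsets of `{1, …, n}`, `n` large.

The infinite version comes from Hindman's theorem applied to `m ↦ χ (binary digits of m)`: grouping
the Hindman sequence into consecutive blocks whose sums are divisible by ever larger powers of two
makes the binary digits of the block sums pairwise disjoint, so sums of blocks become unions of
digit sets. The finite version follows by compactness, taking an ultrafilter limit of bad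
colourings.
-/

def FSfin {n : ℕ} (p : Fin n → ℕ) : Set ℕ :=
  {m : ℕ | ∃ α : Finset (Fin n), α.Nonempty ∧ m = ∑ i ∈ α, p i}

def Ffip : Set (Set ℕ) :=
  {F : Set ℕ | ∀ n : ℕ, ∃ p : Fin n → ℕ, (∀ i, 0 < p i) ∧ FSfin p ⊆ F}

open Finset Function Filter

section

variable {α γ ι κ : Type*} [DecidableEq α]

structure MonochromaticUnions (χ : Finset α → κ) (β : ι → Finset α) : Prop where
  nonempty : ∀ j, (β j).Nonempty
  pairwise_disjoint : Pairwise (Disjoint on β)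
  exists_color : ∃ t, ∀ S : Finset ι, S.Nonempty → χ (S.biUnion β) = t

namespace MonochromaticUnions

variable {χ : Finset α → κ} {β : ι → Finset α}

theorem comp (h : MonochromaticUnions χ β) {e : γ → ι} (he : Injective e) :
    MonochromaticUnions χ (β ∘ e) := by
  classical
  obtain ⟨t, ht⟩ := h.exists_color
  refine ⟨fun j => h.nonempty (e j), h.pairwise_disjoint.comp_of_injective he, t, fun S hS => ?_⟩
  rw [← ht _ (hS.image e), image_biUnion]
  rfl

theorem preimage [DecidableEq γ] {f : γ → α} (hf : Injective f) {χ : Finset γ → κ}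
    (h : MonochromaticUnions (fun s => χ (s.preimage f hf.injOn)) β)
    (hβ : ∀ j, ↑(β j) ⊆ Set.range f) :
    MonochromaticUnions χ fun j => (β j).preimage f hf.injOn := by
  obtain ⟨t, ht⟩ := h.exists_color
  refine ⟨fun j => ?_, fun i j hij => disjoint_preimage (h.pairwise_disjoint hij), t,
    fun S hS => ?_⟩
  · obtain ⟨a, ha⟩ := h.nonempty j
    obtain ⟨x, rfl⟩ := hβ j ha
    exact ⟨x, mem_preimage.2 ha⟩
  · rw [← ht S hS]
    congr 1
    ext
    simp

end MonochromaticUnions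

end

theorem Hindman.pos_of_mem_FS {a : Stream' ℕ} (ha : ∀ i, 0 < a.get i) {m : ℕ}
    (hm : m ∈ FS a) : 0 < m := by
  induction hm with
  | head' a => exact ha 0
  | tail' a m _ ih => exact ih fun i => ha (i + 1)
  | cons' a m _ ih => exact Nat.add_pos_right _ (ih fun i => ha (i + 1))

theorem exists_pos_monochromatic_finsetSums {κ : Type*} [Finite κ] (c : ℕ → κ) :
    ∃ b : ℕ → ℕ, ∃ t, ∀ s : Finset ℕ, s.Nonempty → 0 < ∑ i ∈ s, b i ∧ c (∑ i ∈ s, b i) = t := by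
  obtain ⟨_, ⟨t, rfl⟩, b, hb⟩ := Hindman.FS_partition_regular (fun _ => 1 : Stream' ℕ)
    (Set.range fun t => {m | 0 < m ∧ c m = t}) (Set.finite_range _)
    fun m hm => Set.mem_sUnion.2 ⟨_, ⟨c m, rfl⟩, Hindman.pos_of_mem_FS (fun _ => one_pos) hm, rfl⟩
  exact ⟨b.get, t, fun s hs => hb (Hindman.FS.finsetSum b s hs)⟩

theorem exists_dvd_sum_Ico (b : ℕ → ℕ) (N : ℕ) {d : ℕ} (hd : 0 < d) :
    ∃ s t, N ≤ s ∧ s < t ∧ d ∣ ∑ i ∈ Ico s t, b i := by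
  obtain ⟨s, t, hst, heq⟩ := Set.Finite.exists_lt_map_eq_of_forall_mem
    (f := fun m => (∑ i ∈ range (N + m), b i) % d) (fun m => Nat.mod_lt _ hd) (Set.finite_Iio d)
  refine ⟨N + s, N + t, by omega, by omega, ?_⟩
  have hsplit := sum_range_add_sum_Ico b (show N + s ≤ N + t by omega)
  have hdvd := (Nat.modEq_iff_dvd' (hsplit ▸ Nat.le_add_right _ _)).1 heq
  rwa [← hsplit, Nat.add_sub_cancel_left] at hdvd

theorem Finset.equivBitIndices_subset_Ico {k n : ℕ} (h : 2 ^ k ∣ n) :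
    equivBitIndices n ⊆ Ico k n := by
  intro u hu
  rw [equivBitIndices_apply, List.mem_toFinset] at hu
  refine mem_Ico.2 ⟨?_, u.lt_two_pow_self.trans_le (Nat.two_pow_le_of_mem_bitIndices hu)⟩
  obtain ⟨m, rfl⟩ := h
  rw [Nat.bitIndices_two_pow_mul, List.mem_map] at hu
  obtain ⟨v, -, rfl⟩ := hu
  omega

theorem pairwise_disjoint_of_subset_Ico {f : ℕ → ℕ} (hf : Monotone f) {g : ℕ → Finset ℕ}
    (hg : ∀ j, g j ⊆ Ico (f j) (f (j + 1))) : Pairwise (Disjoint on g) := fun i j hij => by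
  have hIco : Disjoint (Set.Ico (f i) (f (i + 1))) (Set.Ico (f j) (f (j + 1))) := by
    simpa only [Order.succ_eq_add_one] using hf.pairwise_disjoint_on_Ico_succ hij
  rw [onFun, ← disjoint_coe]
  exact hIco.mono (by rw [← coe_Ico]; exact coe_subset.2 (hg i))
    (by rw [← coe_Ico]; exact coe_subset.2 (hg j))

theorem exists_blocks_disjoint_bitIndices (b : ℕ → ℕ) :
    ∃ I : ℕ → Finset ℕ, (∀ j, (I j).Nonempty) ∧ Pairwise (Disjoint on I) ∧
      Pairwise (Disjoint on fun j => equivBitIndices (∑ i ∈ I j, b i)) := by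
  -- With `B n = ∑ i < n, b i`, block `j` is `[s, t)` with `N j ≤ s < t = N (j + 1)`; its sum is
  -- divisible by `2 ^ B (N j)` and at most `B (N (j + 1))`, so its binary digits lie in
  -- `[B (N j), B (N (j + 1)))`.
  choose s t hNs hst hdvd using
    fun N => exists_dvd_sum_Ico b N (pow_pos two_pos (∑ i ∈ range N, b i))
  set N : ℕ → ℕ := fun j => t^[j] 0
  have hN (j : ℕ) : N (j + 1) = t (N j) := iterate_succ_apply' t j 0
  have hN_mono : Monotone N :=
    monotone_nat_of_le_succ fun j => by rw [hN]; exact (hNs _).trans (hst _).le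
  have hB_mono : Monotone fun n => ∑ i ∈ range n, b i :=
    fun m n hmn => sum_le_sum_of_subset (range_mono hmn)
  refine ⟨fun j => Ico (s (N j)) (t (N j)), fun j => nonempty_Ico.2 (hst _),
    pairwise_disjoint_of_subset_Ico hN_mono fun j => ?_,
    pairwise_disjoint_of_subset_Ico (hB_mono.comp hN_mono) fun j => ?_⟩
  · rw [hN]
    exact Ico_subset_Ico_left (hNs _)
  · refine (equivBitIndices_subset_Ico (hdvd (N j))).trans (Ico_subset_Ico_right ?_)
    rw [comp_apply, hN]
    exact sum_le_sum_of_subset (by rw [range_eq_Ico]; exact Ico_subset_Ico_left (Nat.zero_le _))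

theorem exists_monochromaticUnions {κ : Type*} [Finite κ] (χ : Finset ℕ → κ) :
    ∃ β : ℕ → Finset ℕ, MonochromaticUnions χ β := by
  obtain ⟨b, t, hb⟩ := exists_pos_monochromatic_finsetSums (χ ∘ equivBitIndices)
  obtain ⟨I, hI_ne, hI_disj, hbits_disj⟩ := exists_blocks_disjoint_bitIndices b
  have hunion (S : Finset ℕ) : S.biUnion (fun j => equivBitIndices (∑ i ∈ I j, b i)) =
      equivBitIndices (∑ i ∈ S.biUnion I, b i) := by
    apply equivBitIndices.symm.injective
    rw [Equiv.symm_apply_apply, equivBitIndices_symm_apply, sum_biUnion (hbits_disj.set_pairwise _),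
      sum_biUnion (hI_disj.set_pairwise _)]
    simp only [equivBitIndices_apply, sum_toFinset_bitIndices_two_pow]
  refine ⟨_, fun j => nonempty_iff_ne_empty.2 fun h => ?_, hbits_disj, t, fun S hS => ?_⟩
  · have := congrArg equivBitIndices.symm h
    rw [Equiv.symm_apply_apply, equivBitIndices_symm_apply, sum_empty] at this
    exact (hb _ (hI_ne j)).1.ne' this
  · rw [hunion]
    exact (hb _ (hS.biUnion fun j _ => hI_ne j)).2

theorem exists_forall_monochromaticUnions_fin {κ : Type*} [Finite κ] (L : ℕ) :
    ∃ n, ∀ χ : Finset (Fin n) → κ, ∃ β : Fin L → Finset (Fin n), MonochromaticUnions χ β := by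
  by_contra! h
  choose χ hχ using h
  let U : Ultrafilter ℕ := .of atTop
  have hlim (s : Finset ℕ) :
      ∃ t, ∀ᶠ n in U, χ n (s.preimage Fin.val Fin.val_injective.injOn) = t := by
    obtain ⟨t, ht⟩ :=
      (U.map fun n => χ n (s.preimage Fin.val Fin.val_injective.injOn)).eq_pure_of_finite
    have ht' : {t} ∈ U.map fun n => χ n (s.preimage Fin.val Fin.val_injective.injOn) := by
      rw [ht]
      exact Ultrafilter.mem_pure.2 rfl
    exact ⟨t, Ultrafilter.mem_map.1 ht'⟩
  choose c hc using hlim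
  obtain ⟨β, hβ⟩ := exists_monochromaticUnions c
  have hβL := hβ.comp (Fin.val_injective (n := L))
  obtain ⟨t, ht⟩ := hβL.exists_color
  obtain ⟨M, hM⟩ := exists_nat_subset_range (univ.biUnion (β ∘ Fin.val))
  have hU_ge : ∀ᶠ n in (U : Filter ℕ), M ≤ n := Ultrafilter.of_le atTop (eventually_ge_atTop M)
  obtain ⟨n, hMn, hagree⟩ := (hU_ge.and
    (eventually_all.2 fun S : Finset (Fin L) => hc (S.biUnion (β ∘ Fin.val)))).exists
  refine hχ n _ (MonochromaticUnions.preimage Fin.val_injective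
    ⟨hβL.nonempty, hβL.pairwise_disjoint, t, fun S hS => (hagree S).trans (ht S hS)⟩
    fun j x hx => ?_)
  rw [Fin.range_val]
  exact (mem_range.1 (hM (mem_biUnion.2 ⟨j, mem_univ _, hx⟩))).trans_le hMn

def HasFSfin (A : Set ℕ) (L : ℕ) : Prop :=
  ∃ q : Fin L → ℕ, (∀ i, 0 < q i) ∧ FSfin q ⊆ A

theorem FSfin_comp_subset {m n : ℕ} (q : Fin n → ℕ) {e : Fin m → Fin n} (he : Injective e) :
    FSfin (q ∘ e) ⊆ FSfin q := by
  rintro _ ⟨α, hα, rfl⟩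
  exact ⟨α.map ⟨e, he⟩, hα.map, by simp⟩

theorem hasFSfin_zero (A : Set ℕ) : HasFSfin A 0 :=
  ⟨Fin.elim0, fun i => i.elim0, fun _ ⟨_, ⟨i, _⟩, _⟩ => i.elim0⟩

theorem HasFSfin.mono {A B : Set ℕ} {L L' : ℕ} (h : HasFSfin A L) (hL : L' ≤ L) (hAB : A ⊆ B) :
    HasFSfin B L' :=
  let ⟨q, hq, hqA⟩ := h
  ⟨q ∘ Fin.castLE hL, fun _ => hq _,
    (FSfin_comp_subset q (Fin.castLE_injective hL)).trans (hqA.trans hAB)⟩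

theorem MonochromaticUnions.exists_hasFSfin {κ : Type*} {n L : ℕ} {p : Fin n → ℕ}
    (hp : ∀ i, 0 < p i) {c : ℕ → κ} {β : Fin L → Finset (Fin n)}
    (hβ : MonochromaticUnions (fun s => c (∑ i ∈ s, p i)) β) :
    ∃ t, HasFSfin (FSfin p ∩ c ⁻¹' {t}) L := by
  obtain ⟨t, ht⟩ := hβ.exists_color
  refine ⟨t, fun j => ∑ i ∈ β j, p i, fun j => sum_pos (fun i _ => hp i) (hβ.nonempty j), ?_⟩
  rintro _ ⟨S, hS, rfl⟩
  rw [← sum_biUnion (hβ.pairwise_disjoint.set_pairwise _)]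
  exact ⟨⟨_, hS.biUnion fun j _ => hβ.nonempty j, rfl⟩, ht S hS⟩

def IsFSfinRamsey (L n : ℕ) : Prop :=
  ∀ F₁ F₂ : Set ℕ, HasFSfin (F₁ ∪ F₂) n → HasFSfin F₁ L ∨ HasFSfin F₂ L

theorem IsFSfinRamsey.mono {L L' n n' : ℕ} (h : IsFSfinRamsey L n) (hL : L' ≤ L) (hn : n ≤ n') :
    IsFSfinRamsey L' n' := fun F₁ F₂ hF =>
  (h F₁ F₂ (hF.mono hn subset_rfl)).imp (·.mono hL subset_rfl) (·.mono hL subset_rfl)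

theorem isFSfinRamsey_zero (n : ℕ) : IsFSfinRamsey 0 n :=
  fun F₁ _ _ => .inl (hasFSfin_zero F₁)

theorem exists_isFSfinRamsey (L : ℕ) : ∃ n, IsFSfinRamsey L n := by
  classical
  obtain ⟨n, hn⟩ := exists_forall_monochromaticUnions_fin (κ := Bool) L
  refine ⟨n, fun F₁ F₂ ⟨p, hp, hcover⟩ => ?_⟩
  obtain ⟨β, hβ⟩ := hn fun s => decide (∑ i ∈ s, p i ∈ F₁)
  obtain ⟨t, hq⟩ := hβ.exists_hasFSfin (c := fun m => decide (m ∈ F₁)) hp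
  cases t
  · exact .inr (hq.mono le_rfl fun m ⟨hm, hm₁⟩ => (hcover hm).resolve_left (by simpa using hm₁))
  · exact .inl (hq.mono le_rfl fun m ⟨_, hm₁⟩ => by simpa using hm₁)

/-- If a finite IP-set of length `n` is split into two pieces, then one of the pieces
contains a finite IP-set of length `l n`, where `l n → ∞` as `n → ∞`; consequently the
family `F_fip` has the Ramsey property. -/
theorem fip_ramsey :
    (∃ l : ℕ → ℕ, Filter.Tendsto l Filter.atTop Filter.atTop ∧
      ∀ (n : ℕ) (p : Fin n → ℕ), (∀ i, 0 < p i) → ∀ F₁ F₂ : Set ℕ,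
        FSfin p = F₁ ∪ F₂ →
          (∃ q : Fin (l n) → ℕ, (∀ i, 0 < q i) ∧ FSfin q ⊆ F₁) ∨
          (∃ q : Fin (l n) → ℕ, (∀ i, 0 < q i) ∧ FSfin q ⊆ F₂)) ∧
    (∀ F F₁ F₂ : Set ℕ, F ∈ Ffip → F = F₁ ∪ F₂ → F₁ ∈ Ffip ∨ F₂ ∈ Ffip) := by
  classical
  choose N hN using exists_isFSfinRamsey
  refine ⟨⟨fun n => Nat.findGreatest (IsFSfinRamsey · n) n, ?_, fun n p hp F₁ F₂ hcover => ?_⟩, ?_⟩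
  · exact tendsto_atTop_atTop.2 fun L => ⟨max L (N L), fun n hn =>
      Nat.le_findGreatest (le_of_max_le_left hn) ((hN L).mono le_rfl (le_of_max_le_right hn))⟩
  · exact Nat.findGreatest_spec (P := (IsFSfinRamsey · n)) (Nat.zero_le n)
      (isFSfinRamsey_zero n) F₁ F₂ ⟨p, hp, hcover.le⟩
  · rintro F F₁ F₂ hF rfl
    by_contra! h
    obtain ⟨m₁, h₁⟩ := (not_forall (p := HasFSfin F₁)).1 h.1
    obtain ⟨m₂, h₂⟩ := (not_forall (p := HasFSfin F₂)).1 h.2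
    rcases hN (max m₁ m₂) F₁ F₂ (hF _) with h | h
    · exact h₁ (h.mono (le_max_left _ _) subset_rfl)
    · exact h₂ (h.mono (le_max_right _ _) subset_rfl)
end

section
/- Let π : (X,T) → (Y,S) be a factor map with (X,T) minimal and S a homeomorphism. If π is not almost one-to-one, then inf over y ∈ Y of diam(π^{−1}(y)) is strictly positive. -/
open Metric Set Bornology

section Aux

variable {X Y : Type*} [MetricSpace X]
    [CompactSpace X] [Nonempty X] [MetricSpace Y] [CompactSpace Y] [Nonempty Y]

/-- The set of `y` with small fiber diameter is open. -/
lemma aux_isOpen_small_fiber (π : X → Y) (hπc : Continuous π) (hπs : Function.Surjective π)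
    {ε : ℝ} (hε : 0 < ε) : IsOpen {y : Y | Metric.diam (π ⁻¹' {y}) < ε} := by
  rw [isOpen_iff_mem_nhds]
  intro y hy
  simp only [mem_setOf_eq] at hy
  set K := π ⁻¹' {y} with hK
  have hKc : IsCompact K := (isClosed_singleton.preimage hπc).isCompact
  set δ : ℝ := (ε - Metric.diam K) / 3 with hδdef
  have hδ : 0 < δ := by
    linarith [Metric.diam_nonneg (s := K)]
  set V := Metric.thickening δ K with hV
  have hVopen : IsOpen V := Metric.isOpen_thickening
  have hKV : K ⊆ V := Metric.self_subset_thickening hδ K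
  have hVd : Metric.diam V < ε := by
    calc Metric.diam V ≤ Metric.diam K + 2 * δ := Metric.diam_thickening_le K hδ.le
      _ < ε := by rw [hδdef]; linarith
  -- π is a closed map
  have hclosed : IsClosedMap π := hπc.isClosedMap
  have hC : IsClosed (π '' Vᶜ) := hclosed _ hVopen.isClosed_compl
  have hyC : y ∉ π '' Vᶜ := by
    rintro ⟨x, hxV, rfl⟩
    exact hxV (hKV (by simp [hK]))
  have hmem : (π '' Vᶜ)ᶜ ∈ nhds y := hC.isOpen_compl.mem_nhds hyC
  filter_upwards [hmem] with y' hy'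
  have hsub : π ⁻¹' {y'} ⊆ V := by
    intro x hx
    by_contra hxV
    exact hy' ⟨x, hxV, hx⟩
  calc Metric.diam (π ⁻¹' {y'}) ≤ Metric.diam V :=
        Metric.diam_mono hsub (hKc.isBounded.thickening)
    _ < ε := hVd

end Aux

/-- If `π : (X,T) → (Y,S)` is a factor map with `(X,T)` minimal and `S` a homeomorphism,
and `π` is not almost one-to-one, then the infimum of the diameters of the fibers of `π`
is strictly positive. -/
theorem fibers_diam_pos_of_not_almost_one_to_one {X Y : Type*} [MetricSpace X]
    [CompactSpace X] [Nonempty X] [MetricSpace Y] [CompactSpace Y] [Nonempty Y]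
    (T : X → X) (hT : Continuous T) (hTs : Function.Surjective T)
    (hmin : ∀ x : X, Dense (Set.range fun n : ℕ => T^[n] x))
    (S : Y ≃ₜ Y) (π : X → Y) (hπc : Continuous π) (hπs : Function.Surjective π)
    (hcomm : π ∘ T = ⇑S ∘ π)
    (hnot : ¬ Dense {x : X | π ⁻¹' {π x} = {x}}) :
    0 < ⨅ y : Y, Metric.diam (π ⁻¹' {y}) := by
  by_contra h
  push_neg at h
  have hinf0 : ⨅ y : Y, Metric.diam (π ⁻¹' {y}) = 0 :=
    le_antisymm h (Real.iInf_nonneg fun _ => Metric.diam_nonneg)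
  -- For every ε > 0 there is a fiber of diameter < ε
  have hsmall : ∀ ε > 0, ∃ y : Y, Metric.diam (π ⁻¹' {y}) < ε := by
    intro ε hε
    have : ⨅ y : Y, Metric.diam (π ⁻¹' {y}) < ε := hinf0 ▸ hε
    exact exists_lt_of_ciInf_lt this
  -- commutation iterated
  have hcomm' : ∀ (n : ℕ) (x : X), π (T^[n] x) = (⇑S)^[n] (π x) := by
    intro n
    induction n with
    | zero => intro x; simp
    | succ n ih =>
      intro x
      rw [Function.iterate_succ_apply', Function.iterate_succ_apply']
      rw [show π (T (T^[n] x)) = S (π (T^[n] x)) from congrFun hcomm (T^[n] x), ih]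
  -- fibers map under iterates
  have hfiber : ∀ (n : ℕ) (y : Y), π ⁻¹' {(⇑S)^[n] y} = T^[n] '' (π ⁻¹' {y}) := by
    intro n y
    ext z
    simp only [mem_preimage, mem_singleton_iff, mem_image]
    constructor
    · intro hz
      obtain ⟨w, rfl⟩ := (hTs.iterate n) z
      refine ⟨w, ?_, rfl⟩
      have : (⇑S)^[n] (π w) = (⇑S)^[n] y := by rw [← hcomm' n w, hz]
      exact (S.injective.iterate n) this
    · rintro ⟨w, hw, rfl⟩
      rw [hcomm' n w, hw]
  -- the sets of points with small fibers are open and dense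
  set D : ℝ → Set X := fun ε => π ⁻¹' {y : Y | Metric.diam (π ⁻¹' {y}) < ε} with hD
  have hDopen : ∀ ε > 0, IsOpen (D ε) := fun ε hε =>
    (aux_isOpen_small_fiber π hπc hπs hε).preimage hπc
  have hDdense : ∀ ε > 0, Dense (D ε) := by
    intro ε hε
    rw [dense_iff_inter_open]
    intro U hU ⟨x₀, hx₀⟩
    -- cover X by preimages of U under iterates of T
    have hcover : univ ⊆ ⋃ n : ℕ, (T^[n]) ⁻¹' U := by
      intro x _
      obtain ⟨p, ⟨n, rfl⟩, hpU⟩ := (hmin x).exists_mem_open hU ⟨x₀, hx₀⟩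
      exact mem_iUnion.2 ⟨n, hpU⟩
    obtain ⟨s, hs⟩ := isCompact_univ.elim_finite_subcover (fun n : ℕ => (T^[n]) ⁻¹' U)
      (fun n => hU.preimage (hT.iterate n)) hcover
    -- uniform continuity of all iterates T^[n], n ∈ s, simultaneously
    set F : X → (↥s → X) := fun x n => T^[(n : ℕ)] x with hF
    have hFc : Continuous F := continuous_pi fun n => hT.iterate (n : ℕ)
    have hFu : UniformContinuous F := CompactSpace.uniformContinuous_of_continuous hFc
    obtain ⟨δ, hδ, hδ'⟩ := Metric.uniformContinuous_iff.mp hFu (ε / 2) (by positivity)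
    obtain ⟨y, hy⟩ := hsmall δ hδ
    obtain ⟨x, hx⟩ := hπs y
    obtain ⟨n, hns, hnU⟩ := mem_iUnion₂.1 (hs (mem_univ x))
    refine ⟨T^[n] x, hnU, ?_⟩
    simp only [hD, mem_preimage, mem_setOf_eq]
    have hfib : π ⁻¹' {π (T^[n] x)} = T^[n] '' (π ⁻¹' {y}) := by
      rw [hcomm' n x, hx, hfiber n y]
    rw [hfib]
    have hKb : IsBounded (π ⁻¹' {y}) := (isClosed_singleton.preimage hπc).isCompact.isBounded
    have : Metric.diam (T^[n] '' (π ⁻¹' {y})) ≤ ε / 2 := by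
      apply Metric.diam_le_of_forall_dist_le (by positivity)
      rintro _ ⟨a, ha, rfl⟩ _ ⟨b, hb, rfl⟩
      have hab : dist a b < δ :=
        lt_of_le_of_lt (Metric.dist_le_diam_of_mem hKb ha hb) hy
      have := hδ' hab
      calc dist (T^[n] a) (T^[n] b) = dist (F a ⟨n, hns⟩) (F b ⟨n, hns⟩) := rfl
        _ ≤ dist (F a) (F b) := dist_le_pi_dist _ _ _
        _ ≤ ε / 2 := this.le
    linarith
  -- Baire category: intersection of the D (1/(n+1)) is dense
  have hG : Dense (⋂ n : ℕ, D (1 / (n + 1))) := by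
    apply dense_iInter_of_isOpen
    · intro n
      exact hDopen _ (by positivity)
    · intro n
      exact hDdense _ (by positivity)
  apply hnot
  apply hG.mono
  intro x hx
  simp only [mem_iInter] at hx
  have hdiam0 : Metric.diam (π ⁻¹' {π x}) = 0 := by
    by_contra hne
    have hpos : 0 < Metric.diam (π ⁻¹' {π x}) :=
      lt_of_le_of_ne Metric.diam_nonneg (Ne.symm hne)
    obtain ⟨n, hn⟩ := exists_nat_one_div_lt hpos
    exact absurd (hx n) (by simp only [hD, mem_preimage, mem_setOf_eq]; linarith)
  have hKb : IsBounded (π ⁻¹' {π x}) := (isClosed_singleton.preimage hπc).isCompact.isBounded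
  simp only [mem_setOf_eq]
  apply Subset.antisymm
  · intro z hz
    have : dist z x ≤ 0 := hdiam0 ▸ Metric.dist_le_diam_of_mem hKb hz rfl
    simp only [mem_singleton_iff]
    exact dist_le_zero.mp this
  · rintro z rfl
    rfl
end

section
/- Let (X,T) and (Y,S) be minimal topological dynamical systems and π : X → Y a proximal factor map that is not almost one-to-one. Then (X,T) is strongly F_ip-sensitive: there exists δ > 0 such that for every nonempty open U ⊆ X there are x,z ∈ U with {n ∈ ℤ≥0 : d(Tⁿx, Tⁿz) > δ} containing an infinite IP-set. -/
open Filter Topology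

set_option linter.unusedSectionVars false

attribute [local instance] Ultrafilter.add Ultrafilter.addSemigroup

section UST
variable {X : Type*} [MetricSpace X] [CompactSpace X]

noncomputable def ust (T : X → X) (p : Ultrafilter ℕ) (x : X) : X :=
  Ultrafilter.extend (fun n => T^[n] x) p

theorem ust_def (T : X → X) (p : Ultrafilter ℕ) (x : X) :
    ust T p x = Ultrafilter.extend (fun n => T^[n] x) p := rfl

theorem ust_tendsto (T : X → X) (p : Ultrafilter ℕ) (x : X) :
    Tendsto (fun n => T^[n] x) ↑p (𝓝 (ust T p x)) := by
  obtain ⟨c, -, hc⟩ := isCompact_univ.ultrafilter_le_nhds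
    (p.map (fun n => T^[n] x)) (by simp)
  have h : ust T p x = c := ultrafilter_extend_eq_iff.mpr hc
  rw [h]
  rwa [Ultrafilter.coe_map] at hc

theorem ust_eq_of_tendsto (T : X → X) (p : Ultrafilter ℕ) (x : X) {c : X}
    (h : Tendsto (fun n => T^[n] x) ↑p (𝓝 c)) : ust T p x = c := by
  rw [ust_def, ultrafilter_extend_eq_iff, Ultrafilter.coe_map]
  exact h

theorem ust_mem_of_open (T : X → X) (p : Ultrafilter ℕ) (x : X) {O : Set X}
    (hO : IsOpen O) (hx : ust T p x ∈ O) : {n | T^[n] x ∈ O} ∈ p :=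
  (ust_tendsto T p x).eventually (hO.mem_nhds hx)

theorem ust_dist_mem (T : X → X) (p : Ultrafilter ℕ) (x : X) {ε : ℝ} (hε : 0 < ε) :
    {n | dist (T^[n] x) (ust T p x) < ε} ∈ p := by
  have := ust_mem_of_open T p x (Metric.isOpen_ball (x := ust T p x) (ε := ε))
    (Metric.mem_ball_self hε)
  simpa [Metric.mem_ball] using this

/-- If the orbits of `x` and `z` are `p`-often close, the `p`-limits agree. -/
theorem ust_eq_of_dist (T : X → X) (p : Ultrafilter ℕ) (x z : X)
    (h : ∀ ε > (0:ℝ), {n | dist (T^[n] x) (T^[n] z) < ε} ∈ p) :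
    ust T p x = ust T p z := by
  by_contra hne
  have hd : 0 < dist (ust T p x) (ust T p z) := dist_pos.mpr hne
  set ε := dist (ust T p x) (ust T p z) / 4 with hε
  have hε0 : 0 < ε := by positivity
  obtain ⟨n, ⟨h1, h2⟩, h3⟩ := Ultrafilter.nonempty_of_mem
    (inter_mem (inter_mem (ust_dist_mem T p x hε0) (ust_dist_mem T p z hε0)) (h ε hε0))
  have : dist (ust T p x) (ust T p z) ≤
      dist (ust T p x) (T^[n] x) + dist (T^[n] x) (T^[n] z) + dist (T^[n] z) (ust T p z) :=
    dist_triangle4 _ _ _ _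
  simp only [Set.mem_setOf_eq] at h1 h2 h3
  have e1 : dist (ust T p x) (T^[n] x) = dist (T^[n] x) (ust T p x) := dist_comm _ _
  linarith

theorem ust_continuous (T : X → X) (x : X) : Continuous (fun p => ust T p x) :=
  continuous_ultrafilter_extend _

/-- Key algebraic property: `(p+q)•x = p•(q•x)`. -/
theorem ust_add (T : X → X) (hT : Continuous T) (p q : Ultrafilter ℕ) (x : X) :
    ust T (p + q) x = ust T p (ust T q x) := by
  apply ust_eq_of_tendsto
  rw [tendsto_def]
  intro s hs
  obtain ⟨O, hOs, hO, hmem⟩ := mem_nhds_iff.mp hs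
  refine mem_of_superset ?_ (Set.preimage_mono hOs)
  have : ∀ᶠ m in ↑p, ∀ᶠ n in ↑q, T^[m + n] x ∈ O := by
    filter_upwards [ust_mem_of_open T p (ust T q x) hO hmem] with m hm
    have hc : Continuous (T^[m]) := hT.iterate m
    have ht : Tendsto (fun n => T^[m] (T^[n] x)) ↑q (𝓝 (T^[m] (ust T q x))) :=
      (hc.tendsto _).comp (ust_tendsto T q x)
    filter_upwards [ht.eventually (hO.mem_nhds hm)] with n hn
    rwa [Function.iterate_add_apply]
  exact (Ultrafilter.eventually_add p q _).mpr this

/-- Shift property: `T (p•x) = (σ p)•x`. -/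
theorem ust_shift (T : X → X) (hT : Continuous T) (p : Ultrafilter ℕ) (x : X) :
    ust T (p.map (· + 1)) x = T (ust T p x) := by
  apply ust_eq_of_tendsto
  rw [Ultrafilter.coe_map, tendsto_map'_iff]
  have : ((fun n => T^[n] x) ∘ (· + 1)) = fun n => T (T^[n] x) := by
    funext n
    simp [Function.iterate_succ_apply']
  rw [this]
  exact (hT.tendsto _).comp (ust_tendsto T p x)

theorem closed_invariant_eq_univ {X : Type*} [MetricSpace X] [CompactSpace X]
    {T : X → X} (hmin : ∀ x : X, Dense (Set.range fun n : ℕ => T^[n] x))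
    {K : Set X} (hK : IsClosed K) (hne : K.Nonempty) (hinv : ∀ w ∈ K, T w ∈ K) :
    K = Set.univ := by
  obtain ⟨w, hw⟩ := hne
  have horb : ∀ n : ℕ, T^[n] w ∈ K := by
    intro n
    induction n with
    | zero => simpa using hw
    | succ n ih => rw [Function.iterate_succ_apply']; exact hinv _ ih
  have hsub : Set.range (fun n : ℕ => T^[n] w) ⊆ K := by
    rintro _ ⟨n, rfl⟩; exact horb n
  have hcl := closure_mono hsub
  rw [(hmin w).closure_eq, hK.closure_eq] at hcl
  exact Set.eq_univ_of_univ_subset hcl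

end UST

section FSCOMB

theorem sum_mem_FS : ∀ (k : ℕ) (α : Finset ℕ), α.card = k → α.Nonempty →
    ∀ (a : Stream' ℕ), (∑ i ∈ α, a.get i) ∈ Hindman.FS a := by
  intro k
  induction k using Nat.strong_induction_on with
  | _ k ih =>
    intro α hcard hne a
    set m := α.min' hne with hm_def
    have hm : m ∈ α := α.min'_mem hne
    by_cases h1 : α.erase m = ∅
    · have hαm : α = {m} := by
        apply Finset.eq_singleton_iff_unique_mem.mpr
        refine ⟨hm, fun i hi => ?_⟩
        by_contra hne'
        have : i ∈ α.erase m := Finset.mem_erase.mpr ⟨hne', hi⟩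
        simp [h1] at this
      rw [hαm, Finset.sum_singleton]
      exact Hindman.FS.singleton a m
    · have hβ'ne : (α.erase m).Nonempty := Finset.nonempty_of_ne_empty h1
      have hgt : ∀ i ∈ α.erase m, m + 1 ≤ i := by
        intro i hi
        obtain ⟨hne', hi'⟩ := Finset.mem_erase.mp hi
        have := α.min'_le i hi'
        omega
      set β := (α.erase m).image (fun i => i - (m+1)) with hβ_def
      have hβne : β.Nonempty := hβ'ne.image _
      have hinj : ∀ x ∈ α.erase m, ∀ y ∈ α.erase m,
          x - (m+1) = y - (m+1) → x = y := by
        intro x hx y hy hxy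
        have := hgt x hx
        have := hgt y hy
        omega
      have hsum : ∑ j ∈ β, (a.drop (m+1)).get j = ∑ i ∈ α.erase m, a.get i := by
        rw [hβ_def, Finset.sum_image hinj]
        apply Finset.sum_congr rfl
        intro i hi
        rw [Stream'.get_drop]
        congr 1
        have := hgt i hi
        omega
      have hcardβ : β.card < k := by
        have h2 : β.card ≤ (α.erase m).card := Finset.card_image_le
        have h3 : (α.erase m).card < α.card := Finset.card_erase_lt_of_mem hm
        omega
      have hIH : (∑ j ∈ β, (a.drop (m+1)).get j) ∈ Hindman.FS (a.drop (m+1)) :=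
        ih β.card hcardβ β rfl hβne (a.drop (m+1))
      have hcons : a.get m + (∑ j ∈ β, (a.drop (m+1)).get j) ∈ Hindman.FS (a.drop m) := by
        have h4 : (a.drop m).tail = a.drop (m+1) := Stream'.tail_drop'
        have h5 := Hindman.FS.cons (a.drop m) (∑ j ∈ β, (a.drop (m+1)).get j)
          (by rw [h4]; exact hIH)
        rwa [Stream'.head_drop] at h5
      have h6 : (∑ i ∈ α, a.get i) = a.get m + ∑ i ∈ α.erase m, a.get i :=
        (Finset.add_sum_erase α a.get hm).symm
      rw [h6, ← hsum]
      exact Hindman.FS_iter_tail_sub_FS a m hcons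

end FSCOMB

/-- The (infinite) IP-set generated by a sequence `p : ℕ → ℕ`. -/
def FSinf (p : ℕ → ℕ) : Set ℕ :=
  {m : ℕ | ∃ α : Finset ℕ, α.Nonempty ∧ m = ∑ i ∈ α, p i}

theorem FSinf_subset_FS (a : Stream' ℕ) : FSinf a.get ⊆ Hindman.FS a := by
  rintro m ⟨α, hne, rfl⟩
  exact sum_mem_FS α.card α rfl hne a

/-- If `π : X → Y` is a proximal factor map between minimal systems which is not almost
one-to-one, then `(X,T)` is strongly `F_ip`-sensitive. -/
theorem strong_Fip_sensitive_of_proximal_not_a1to1 {X Y : Type*} [MetricSpace X]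
    [CompactSpace X] [MetricSpace Y] [CompactSpace Y]
    (T : X → X) (hT : Continuous T) (hTs : Function.Surjective T)
    (S : Y → Y) (hS : Continuous S) (hSs : Function.Surjective S)
    (hminX : ∀ x : X, Dense (Set.range fun n : ℕ => T^[n] x))
    (hminY : ∀ y : Y, Dense (Set.range fun n : ℕ => S^[n] y))
    (π : X → Y) (hπc : Continuous π) (hπs : Function.Surjective π)
    (hcomm : π ∘ T = S ∘ π)
    (hprox : ∀ x₁ x₂ : X, π x₁ = π x₂ →
      ∀ ε > (0 : ℝ), ∃ n : ℕ, dist (T^[n] x₁) (T^[n] x₂) < ε)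
    (hnot : ¬ Dense {x : X | π ⁻¹' {π x} = {x}}) :
    ∃ δ > (0 : ℝ), ∀ U : Set X, IsOpen U → U.Nonempty →
      ∃ x ∈ U, ∃ z ∈ U, ∃ p : ℕ → ℕ, (∀ i, 0 < p i) ∧
        FSinf p ⊆ {n : ℕ | δ < dist (T^[n] x) (T^[n] z)} := by
  classical
  -- X is nonempty
  have hXne : Nonempty X := by
    rcases isEmpty_or_nonempty X with h | h
    · exact absurd (fun x => (IsEmpty.false x).elim) hnot
    · exact h
  -- iterated commutation
  have hcommn : ∀ (n : ℕ) (x : X), π (T^[n] x) = S^[n] (π x) := by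
    intro n
    induction n with
    | zero => intro x; simp
    | succ n ih =>
      intro x
      rw [Function.iterate_succ_apply', Function.iterate_succ_apply',
        show π (T (T^[n] x)) = S (π (T^[n] x)) from congrFun hcomm _, ih]
  -- Step 1 : a ball on which all fibers are nontrivial
  obtain ⟨c₀, hc₀⟩ : ∃ c₀ : X, c₀ ∉ closure {x : X | π ⁻¹' {π x} = {x}} := by
    by_contra h
    push_neg at h
    exact hnot h
  obtain ⟨r₀, hr₀, hball₀⟩ : ∃ r₀ > (0:ℝ), Metric.ball c₀ r₀ ⊆
      (closure {x : X | π ⁻¹' {π x} = {x}})ᶜ :=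
    Metric.isOpen_iff.mp (isClosed_closure).isOpen_compl c₀ hc₀
  have hmate : ∀ x ∈ Metric.ball c₀ r₀, ∃ β : X, π β = π x ∧ β ≠ x := by
    intro x hx
    have hxS : π ⁻¹' {π x} ≠ {x} := by
      intro hcon
      exact hball₀ hx (subset_closure hcon)
    have hsub : {x} ⊆ π ⁻¹' {π x} := by
      intro w hw
      simp only [Set.mem_singleton_iff] at hw
      simp [hw]
    obtain ⟨β, hβ1, hβ2⟩ := Set.exists_of_ssubset (hsub.ssubset_of_ne (Ne.symm hxS))
    exact ⟨β, hβ1, by simpa using hβ2⟩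
  -- Step 2 : Baire category gives a ball with uniformly wide fibers
  set F : ℝ → Set X := fun c =>
    Prod.fst '' {q : X × X | π q.2 = π q.1 ∧ c ≤ dist q.1 q.2} with hF_def
  have hFclosed : ∀ c, IsClosed (F c) := by
    intro c
    have h1 : IsClosed {q : X × X | π q.2 = π q.1 ∧ c ≤ dist q.1 q.2} :=
      (isClosed_eq (hπc.comp continuous_snd) (hπc.comp continuous_fst)).inter
        (isClosed_le continuous_const continuous_dist)
    exact (h1.isCompact.image continuous_fst).isClosed
  have hFmem : ∀ {x : X} {β : X} {c : ℝ}, π β = π x → c ≤ dist x β → x ∈ F c := by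
    intro x β c h1 h2
    exact ⟨(x, β), ⟨h1, h2⟩, rfl⟩
  set g : ℕ → Set X := fun k => F (1/(k+1)) ∪ (Metric.ball c₀ r₀)ᶜ with hg_def
  have hgclosed : ∀ k, IsClosed (g k) := fun k =>
    (hFclosed _).union (Metric.isOpen_ball).isClosed_compl
  have hgcover : (⋃ k, g k) = Set.univ := by
    apply Set.eq_univ_of_forall
    intro x
    by_cases hx : x ∈ Metric.ball c₀ r₀
    · obtain ⟨β, hβ1, hβ2⟩ := hmate x hx
      have hd : 0 < dist x β := dist_pos.mpr (Ne.symm hβ2)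
      obtain ⟨k, hk⟩ := exists_nat_one_div_lt hd
      exact Set.mem_iUnion.mpr ⟨k, Or.inl (hFmem hβ1 hk.le)⟩
    · exact Set.mem_iUnion.mpr ⟨0, Or.inr hx⟩
  have hdense := dense_iUnion_interior_of_closed hgclosed hgcover
  obtain ⟨w₁, hw₁mem, hw₁ball⟩ := hdense.inter_open_nonempty (Metric.ball c₀ r₀)
    Metric.isOpen_ball ⟨c₀, Metric.mem_ball_self hr₀⟩
  obtain ⟨k₀, hk₀⟩ := Set.mem_iUnion.mp hw₁ball
  obtain ⟨r₁, hr₁, hball₁⟩ : ∃ r₁ > (0:ℝ), Metric.ball w₁ r₁ ⊆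
      interior (g k₀) ∩ Metric.ball c₀ r₀ :=
    Metric.isOpen_iff.mp (isOpen_interior.inter Metric.isOpen_ball) w₁ ⟨hk₀, hw₁mem⟩
  set η : ℝ := 1/(k₀+1) with hη_def
  have hηpos : (0:ℝ) < η := by positivity
  -- the wide-fiber ball
  have hwide : ∀ x ∈ Metric.ball w₁ r₁, ∃ β : X, π β = π x ∧ η ≤ dist x β := by
    intro x hx
    have h1 : x ∈ g k₀ := interior_subset (hball₁ hx).1
    have h2 : x ∈ Metric.ball c₀ r₀ := (hball₁ hx).2
    rcases h1 with h1 | h1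
    · obtain ⟨q, ⟨hq1, hq2⟩, hq3⟩ := h1
      subst hq3
      exact ⟨q.2, hq1, hq2⟩
    · exact absurd h2 h1
  -- Step 3 : uniform bound on hitting times of the wide ball
  have hVopen : IsOpen (Metric.ball w₁ r₁) := Metric.isOpen_ball
  have hVne : (Metric.ball w₁ r₁).Nonempty := ⟨w₁, Metric.mem_ball_self hr₁⟩
  obtain ⟨t, ht⟩ : ∃ t : Finset ℕ, Set.univ ⊆ ⋃ j ∈ t, (T^[j]) ⁻¹' (Metric.ball w₁ r₁) := by
    apply isCompact_univ.elim_finite_subcover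
      (fun j : ℕ => (T^[j]) ⁻¹' (Metric.ball w₁ r₁))
      (fun j => hVopen.preimage (hT.iterate j))
    intro x _
    obtain ⟨w, hw1, hw2⟩ := (hminX x).inter_open_nonempty _ hVopen hVne
    obtain ⟨n, hn⟩ := hw2
    exact Set.mem_iUnion.mpr ⟨n, by rw [← hn] at hw1; exact hw1⟩
  have hhit : ∀ x : X, ∃ j ∈ t, T^[j] x ∈ Metric.ball w₁ r₁ := by
    intro x
    have := ht (Set.mem_univ x)
    simpa using this
  have htne : t.Nonempty := by
    obtain ⟨j, hj, -⟩ := hhit (Classical.arbitrary X)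
    exact ⟨j, hj⟩
  -- Step 4 : a uniform modulus of continuity for T^[j], j ∈ t
  have hmod : ∀ j : ℕ, ∃ d > (0:ℝ), ∀ a b : X, dist a b < d →
      dist (T^[j] a) (T^[j] b) < η/4 := by
    intro j
    have huc : UniformContinuous (T^[j]) :=
      CompactSpace.uniformContinuous_of_continuous (hT.iterate j)
    obtain ⟨d, hd, h⟩ := Metric.uniformContinuous_iff.mp huc (η/4) (by positivity)
    exact ⟨d, hd, fun a b hab => h hab⟩
  choose dmod hdmod_pos hdmod using hmod
  set δ₁ : ℝ := (t.inf' htne dmod) / 2 with hδ₁_def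
  have hδ₁pos : 0 < δ₁ := by
    have : 0 < t.inf' htne dmod := by
      rw [Finset.lt_inf'_iff]
      exact fun j _ => hdmod_pos j
    positivity
  have hδ₁le : ∀ j ∈ t, 2 * δ₁ ≤ dmod j := by
    intro j hj
    have := Finset.inf'_le dmod hj
    rw [hδ₁_def]
    linarith
  have hpush : ∀ j ∈ t, ∀ a b : X, dist a b < 2 * δ₁ →
      dist (T^[j] a) (T^[j] b) < η/4 := by
    intro j hj a b hab
    exact hdmod j a b (lt_of_lt_of_le hab (hδ₁le j hj))
  -- the sensitivity constant
  refine ⟨δ₁/2, by positivity, ?_⟩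
  intro U hU hUne
  obtain ⟨x₀, hx₀⟩ := hUne
  obtain ⟨ρ₀, hρ₀, hρball⟩ : ∃ ρ > (0:ℝ), Metric.ball x₀ ρ ⊆ U :=
    Metric.isOpen_iff.mp hU x₀ hx₀
  set ρ := min ρ₀ δ₁ with hρ_def
  have hρpos : 0 < ρ := lt_min hρ₀ hδ₁pos
  have hρball' : Metric.ball x₀ ρ ⊆ U :=
    (Metric.ball_subset_ball (min_le_left _ _)).trans hρball
  have hρle : ρ ≤ δ₁ := min_le_right _ _
  set xb := x₀ with hxb_def
  -- a wide point on the orbit of xb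
  obtain ⟨j, hjt, hjV⟩ := hhit xb
  set α := T^[j] xb with hα_def
  obtain ⟨β, hβfib, hβdist⟩ := hwide α hjV
  obtain ⟨A, hA⟩ : ∃ A, T^[j] A = β := (hTs.iterate j) β
  -- the pair (xb, A) lies in the same fiber after j steps
  have hfib_iter : ∀ M : ℕ, π (T^[M + j] xb) = π (T^[M + j] A) := by
    intro M
    rw [Function.iterate_add_apply, Function.iterate_add_apply, hcommn M, hcommn M,
      ← hα_def, hA, hβfib]
  -- joint approach of the pair (xb, A) at arbitrarily late times
  have happroach : ∀ ε > (0:ℝ), ∀ M : ℕ, ∃ m, M ≤ m ∧ dist (T^[m] xb) (T^[m] A) < ε := by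
    intro ε hε M
    obtain ⟨n, hn⟩ := hprox (T^[M + j] xb) (T^[M + j] A) (hfib_iter M) ε hε
    refine ⟨n + (M + j), by omega, ?_⟩
    simpa only [Function.iterate_add_apply] using hn
  -- the collapsing subsemigroup of positive ultrafilters
  set P : Set (Ultrafilter ℕ) :=
    {p | ust T p xb = ust T p A ∧ {m : ℕ | 1 ≤ m} ∈ p} with hP_def
  have hPclosed : IsClosed P := by
    have hPeq : P = {p : Ultrafilter ℕ | ust T p xb = ust T p A} ∩
        {p : Ultrafilter ℕ | {m : ℕ | 1 ≤ m} ∈ p} := rfl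
    rw [hPeq]
    exact (isClosed_eq (ust_continuous T xb) (ust_continuous T A)).inter
      (ultrafilter_isClosed_basic _)
  -- P is nonempty
  set C : ℕ → Set ℕ :=
    fun i => {m | i ≤ m ∧ dist (T^[m] xb) (T^[m] A) < 1/(i+1)} with hC_def
  have hCne : ∀ i, (C i).Nonempty := by
    intro i
    obtain ⟨m, hm1, hm2⟩ := happroach (1/(i+1)) (by positivity) i
    exact ⟨m, hm1, hm2⟩
  have hCanti : ∀ i j', i ≤ j' → C j' ⊆ C i := by
    intro i j' hij m hm
    obtain ⟨h1, h2⟩ := hm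
    refine ⟨by omega, lt_of_lt_of_le h2 ?_⟩
    apply one_div_le_one_div_of_le (by positivity)
    have : (i:ℝ) ≤ (j':ℝ) := Nat.cast_le.mpr hij
    linarith
  have hFne : Filter.NeBot (⨅ i, Filter.principal (C i)) := by
    apply Filter.iInf_neBot_of_directed
    · intro i j'
      exact ⟨max i j', Filter.principal_mono.mpr (hCanti i (max i j') (le_max_left _ _)),
        Filter.principal_mono.mpr (hCanti j' (max i j') (le_max_right _ _))⟩
    · intro i
      exact Filter.principal_neBot_iff.mpr (hCne i)
  obtain ⟨p₀, hp₀⟩ := Ultrafilter.exists_le (⨅ i, Filter.principal (C i))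
  have hp₀mem : ∀ i, C i ∈ p₀ := fun i =>
    Filter.le_def.mp hp₀ _ (Filter.mem_iInf_of_mem i (Filter.mem_principal_self _))
  have hp₀P : p₀ ∈ P := by
    constructor
    · apply ust_eq_of_dist
      intro ε hε
      obtain ⟨i, hi⟩ := exists_nat_one_div_lt hε
      exact Filter.mem_of_superset (hp₀mem i) (fun m hm => lt_trans hm.2 hi)
    · exact Filter.mem_of_superset (hp₀mem 1) (fun m hm => hm.1)
  -- P is a subsemigroup
  have hPadd : ∀ p ∈ P, ∀ q ∈ P, p + q ∈ P := by
    intro p hp q hq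
    refine ⟨?_, ?_⟩
    · rw [ust_add T hT p q xb, ust_add T hT p q A, hq.1]
    · have hev : ∀ᶠ m in ↑p, ∀ᶠ n in ↑q, 1 ≤ m + n := by
        filter_upwards [hp.2] with m hm
        exact Filter.Eventually.of_forall (fun n => by omega)
      exact (Ultrafilter.eventually_add p q _).mpr hev
  -- P is closed under the shift
  have hσ : ∀ p ∈ P, p.map (· + 1) ∈ P := by
    intro p hp
    refine ⟨?_, ?_⟩
    · rw [ust_shift T hT p xb, ust_shift T hT p A, hp.1]
    · rw [Ultrafilter.mem_map]
      apply Filter.mem_of_superset (Filter.univ_mem)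
      intro m _
      simp
  have hPcompact : IsCompact P := hPclosed.isCompact
  -- ultrafilter limits out of P reach all of X, by minimality
  have hEuniv : ∀ w : X, (fun p => ust T p w) '' P = Set.univ := by
    intro w
    apply closed_invariant_eq_univ hminX
    · exact (hPcompact.image (ust_continuous T w)).isClosed
    · exact ⟨ust T p₀ w, ⟨p₀, hp₀P, rfl⟩⟩
    · rintro _ ⟨p, hp, rfl⟩
      exact ⟨p.map (· + 1), hσ p hp, ust_shift T hT p w⟩
  -- choose q₀ ∈ P with q₀ • xb = xb
  obtain ⟨q₀, hq₀P, hq₀⟩ : ∃ q₀ ∈ P, ust T q₀ xb = xb := by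
    have h1 := hEuniv xb
    have h2 : xb ∈ (fun p => ust T p xb) '' P := by rw [h1]; trivial
    obtain ⟨q₀, hq1, hq2⟩ := h2
    exact ⟨q₀, hq1, hq2⟩
  -- choose k ≥ 1 bringing both xb and A into the ball around xb
  have hS1 : {m | T^[m] xb ∈ Metric.ball xb ρ} ∈ q₀ := by
    apply ust_mem_of_open T q₀ xb Metric.isOpen_ball
    rw [hq₀]
    exact Metric.mem_ball_self hρpos
  have hS2 : {m | T^[m] A ∈ Metric.ball xb ρ} ∈ q₀ := by
    apply ust_mem_of_open T q₀ A Metric.isOpen_ball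
    rw [← hq₀P.1, hq₀]
    exact Metric.mem_ball_self hρpos
  obtain ⟨k, ⟨hk1, hk2⟩, hk3⟩ :=
    Ultrafilter.nonempty_of_mem (inter_mem (inter_mem hS1 hS2) hq₀P.2)
  simp only [Set.mem_setOf_eq] at hk1 hk2 hk3
  -- the displacement of A at lag k is large
  have hdisp : 2 * δ₁ ≤ dist A (T^[k] A) := by
    by_contra hcon
    push_neg at hcon
    have c2 : dist (T^[j] A) (T^[j] (T^[k] A)) < η/4 := hpush j hjt _ _ hcon
    have e2 : T^[j] (T^[k] A) = T^[k] β := by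
      rw [← Function.iterate_add_apply, Nat.add_comm, Function.iterate_add_apply, hA]
    rw [hA, e2] at c2
    have c1 : dist (T^[j] (T^[k] A)) (T^[j] xb) < η/4 := by
      apply hpush j hjt
      have h1 : dist (T^[k] A) xb < ρ := by simpa [Metric.mem_ball] using hk2
      have h2 : ρ < 2*δ₁ := lt_of_le_of_lt hρle (by linarith)
      linarith
    rw [e2, ← hα_def] at c1
    have htri : dist α β ≤ dist α (T^[k] β) + dist (T^[k] β) β := dist_triangle _ _ _
    have hc1 : dist α (T^[k] β) = dist (T^[k] β) α := dist_comm _ _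
    have hc2 : dist (T^[k] β) β = dist β (T^[k] β) := dist_comm _ _
    linarith [hβdist]
  -- an idempotent collapsing ultrafilter fixing A
  set R : Set (Ultrafilter ℕ) := {p | p ∈ P ∧ ust T p A = A} with hR_def
  have hRne : R.Nonempty := by
    have h1 := hEuniv A
    have h2 : A ∈ (fun p => ust T p A) '' P := by rw [h1]; trivial
    obtain ⟨q₁, hq1, hq2⟩ := h2
    exact ⟨q₁, hq1, hq2⟩
  have hRclosed : IsClosed R := by
    have hReq : R = P ∩ {p : Ultrafilter ℕ | ust T p A = A} := rfl
    rw [hReq]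
    exact hPclosed.inter (isClosed_eq (ust_continuous T A) continuous_const)
  have hRadd : ∀ p ∈ R, ∀ q ∈ R, p + q ∈ R := by
    intro p hp q hq
    refine ⟨hPadd p hp.1 q hq.1, ?_⟩
    rw [ust_add T hT, hq.2, hp.2]
  obtain ⟨u, huR, hu_idem⟩ := exists_idempotent_in_compact_add_subsemigroup
    Ultrafilter.continuous_add_left R hRne hRclosed.isCompact hRadd
  have hux : ust T u xb = A := by rw [huR.1.1, huR.2]
  -- a modulus for T^[k] at A
  obtain ⟨ε₁', hε₁'pos, hε₁'⟩ : ∃ ε > (0:ℝ), ∀ w : X, dist w A < ε →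
      dist (T^[k] w) (T^[k] A) < δ₁/2 := by
    have hc : ContinuousAt (T^[k]) A := (hT.iterate k).continuousAt
    obtain ⟨ε, hε, h⟩ := Metric.continuousAt_iff.mp hc (δ₁/2) (by positivity)
    exact ⟨ε, hε, fun w hw => h hw⟩
  set ε₁ := min ε₁' (δ₁/2) with hε₁_def
  have hε₁pos : 0 < ε₁ := lt_min hε₁'pos (by positivity)
  have hMmem : {m | T^[m] xb ∈ Metric.ball A ε₁} ∈ u := by
    apply ust_mem_of_open T u xb Metric.isOpen_ball
    rw [hux]
    exact Metric.mem_ball_self hε₁pos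
  have hMsep : {m | T^[m] xb ∈ Metric.ball A ε₁} ⊆
      {n | δ₁/2 < dist (T^[n] xb) (T^[n] (T^[k] xb))} := by
    intro m hm
    simp only [Set.mem_setOf_eq, Metric.mem_ball] at hm ⊢
    have e3 : T^[m] (T^[k] xb) = T^[k] (T^[m] xb) := by
      rw [← Function.iterate_add_apply, Nat.add_comm, Function.iterate_add_apply]
    rw [e3]
    have d1 : dist (T^[m] xb) A < δ₁/2 := lt_of_lt_of_le hm (min_le_right _ _)
    have d2 : dist (T^[k] (T^[m] xb)) (T^[k] A) < δ₁/2 :=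
      hε₁' _ (lt_of_lt_of_le hm (min_le_left _ _))
    have dtri : dist A (T^[k] A) ≤ dist A (T^[m] xb) +
        dist (T^[m] xb) (T^[k] (T^[m] xb)) + dist (T^[k] (T^[m] xb)) (T^[k] A) :=
      dist_triangle4 _ _ _ _
    have hc1 : dist A (T^[m] xb) = dist (T^[m] xb) A := dist_comm _ _
    linarith [hdisp]
  -- conclude via Hindman's theorem
  have hSEP : ({m : ℕ | 1 ≤ m} ∩
      {n | δ₁/2 < dist (T^[n] xb) (T^[n] (T^[k] xb))}) ∈ u :=
    inter_mem huR.1.2 (mem_of_superset hMmem hMsep)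
  obtain ⟨a, ha⟩ := Hindman.exists_FS_of_large u hu_idem _ hSEP
  refine ⟨xb, hρball' (Metric.mem_ball_self hρpos), T^[k] xb, hρball' hk1, a.get, ?_, ?_⟩
  · intro i
    exact (ha (Hindman.FS.singleton a i)).1
  · intro n hn
    exact (ha (FSinf_subset_FS a hn)).2
end

section
/- Let (X,T) be a minimal system. Then (X,T) is strongly F_ip-sensitive if and only if there is δ > 0 such that for every nonempty open subset U of X there exist x ∈ U and y ∈ X with d(x,y) > δ and x strongly proximal to y. -/
/-- `x` is strongly proximal to `y` if `(y,y)` lies in the ω-limit set of `(x,y)`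
under `T × T`. -/
def StronglyProximal {X : Type*} [MetricSpace X] (T : X → X) (x y : X) : Prop :=
  ∀ ε > (0 : ℝ), ∀ N : ℕ, ∃ n ≥ N, dist (T^[n] x) y < ε ∧ dist (T^[n] y) y < ε

open Filter Topology Hindman

attribute [local instance] Ultrafilter.addSemigroup

theorem Hindman.FS.exists_eq_finsetSum {M : Type*} [AddCommMonoid M] {a : Stream' M} {m : M}
    (hm : m ∈ FS a) : ∃ α : Finset ℕ, α.Nonempty ∧ m = ∑ i ∈ α, a.get i := by
  induction hm with
  | head' b => exact ⟨{0}, Finset.singleton_nonempty 0, (Finset.sum_singleton _ _).symm⟩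
  | tail' b m _ ih =>
    obtain ⟨α, hα, rfl⟩ := ih
    exact ⟨α.map (addRightEmbedding 1), hα.map, by simp [Stream'.get_tail]⟩
  | cons' b m _ ih =>
    obtain ⟨α, hα, rfl⟩ := ih
    refine ⟨insert 0 (α.map (addRightEmbedding 1)), Finset.insert_nonempty _ _, ?_⟩
    rw [Finset.sum_insert (by simp)]
    simp [Stream'.get_tail]

theorem FSinf_eq_FS (a : ℕ → ℕ) : FSinf a = FS (a : Stream' ℕ) :=
  subset_antisymm (fun _ ⟨α, hα, hm⟩ => hm ▸ FS.finsetSum a α hα) fun _ hm =>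
    FS.exists_eq_finsetSum hm

theorem pos_of_mem_FSinf {a : ℕ → ℕ} (ha : ∀ i, 0 < a i) {n : ℕ} (hn : n ∈ FSinf a) : 0 < n := by
  obtain ⟨α, hα, rfl⟩ := hn
  exact Finset.sum_pos (fun i _ => ha i) hα

namespace Ultrafilter

theorem isClosed_setOf_coe_le {α : Type*} (F : Filter α) :
    IsClosed {p : Ultrafilter α | ↑p ≤ F} := by
  simp only [Filter.le_def, Set.ofPred_forall]
  exact isClosed_biInter fun s _ => ultrafilter_isClosed_basic s

theorem coe_add_le_atTop {p q : Ultrafilter ℕ} (hq : (q : Filter ℕ) ≤ atTop) :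
    ((p + q : Ultrafilter ℕ) : Filter ℕ) ≤ atTop :=
  tendsto_atTop.2 fun N => (eventually_add p q _).2 <|
    Eventually.of_forall fun _ =>
      (tendsto_atTop.1 hq N).mono fun _ h => h.trans (Nat.le_add_left _ _)

theorem coe_le_atTop_of_add_self {p : Ultrafilter ℕ} (hp : p + p = p) (hpos : ∀ᶠ n in p, 0 < n) :
    (p : Filter ℕ) ≤ atTop := by
  refine tendsto_atTop.2 fun N => ?_
  -- otherwise `p` contains a finite set, so is principal, and `pure 0` is the only principal
  -- idempotent
  by_contra hN
  obtain ⟨k, -, rfl⟩ := eq_pure_of_finite_mem (Set.finite_lt_nat N)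
    ((Ultrafilter.eventually_not.2 hN).mono fun _ => not_le.1)
  have hk : ∀ᶠ m in ((pure k + pure k : Ultrafilter ℕ) : Filter ℕ), m = k := by
    rw [hp]
    exact eventually_pure.2 rfl
  simp only [eventually_add, coe_pure, Filter.eventually_pure] at hk hpos
  omega

end Ultrafilter

section Dynamics

variable {X : Type*} {T : X → X}

theorem Filter.Tendsto.iterate_add [TopologicalSpace X] (hT : Continuous T)
    {p q : Ultrafilter ℕ} {x y z : X}
    (hp : Tendsto (fun m => T^[m] z) p (𝓝 y)) (hq : Tendsto (fun n => T^[n] x) q (𝓝 z)) :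
    Tendsto (fun n => T^[n] x) ((p + q : Ultrafilter ℕ) : Filter ℕ) (𝓝 y) := by
  intro W hW
  refine (Ultrafilter.eventually_add p q (fun k => T^[k] x ∈ W)).2 ?_
  filter_upwards [hp (interior_mem_nhds.2 hW)] with m hm
  filter_upwards [((hT.iterate m).tendsto z).comp hq (isOpen_interior.mem_nhds hm)] with n hn
  rw [Function.iterate_add_apply]
  exact interior_subset hn

theorem tendsto_iterate_self_of_add_self [TopologicalSpace X] [CompactSpace X] [T2Space X]
    (hT : Continuous T) {p : Ultrafilter ℕ} (hp : p + p = p) {x y : X}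
    (h : Tendsto (fun n => T^[n] x) p (𝓝 y)) : Tendsto (fun n => T^[n] y) p (𝓝 y) := by
  have hlim : Tendsto (fun n => T^[n] y) p (𝓝 _) := (p.map fun n => T^[n] y).le_nhds_lim
  have hx := hlim.iterate_add hT h
  rw [hp] at hx
  rwa [← tendsto_nhds_unique h hx] at hlim

variable [MetricSpace X]

theorem stronglyProximal_iff_mapClusterPt {x y : X} :
    StronglyProximal T x y ↔ MapClusterPt (y, y) atTop fun n => (T^[n] x, T^[n] y) := by
  simp only [Metric.nhds_basis_ball.mapClusterPt_iff_frequently, frequently_atTop,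
    Metric.mem_ball, Prod.dist_eq, max_lt_iff]
  rfl

theorem stronglyProximal_iff_exists_ultrafilter {x y : X} :
    StronglyProximal T x y ↔ ∃ p : Ultrafilter ℕ, (p : Filter ℕ) ≤ atTop ∧
      Tendsto (fun n => T^[n] x) p (𝓝 y) ∧ Tendsto (fun n => T^[n] y) p (𝓝 y) := by
  rw [stronglyProximal_iff_mapClusterPt, mapClusterPt_iff_ultrafilter, nhds_prod_eq]
  simp only [tendsto_prod_iff']

theorem StronglyProximal.of_prodMap {Y : Type*} [MetricSpace Y] {S : Y → Y} {x u : X} {z v : Y}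
    (h : StronglyProximal (Prod.map T S) (x, z) (u, v)) :
    StronglyProximal T x u ∧ StronglyProximal S z v := by
  simp only [stronglyProximal_iff_exists_ultrafilter, Prod.map_iterate, nhds_prod_eq,
    tendsto_prod_iff'] at h ⊢
  obtain ⟨p, hp, ⟨hxu, hzv⟩, huu, hvv⟩ := h
  exact ⟨⟨p, hp, hxu, huu⟩, p, hp, hzv, hvv⟩

theorem exists_stronglyProximal_of_FSinf_subset [CompactSpace X] (hT : Continuous T) {w : X}
    {K : Set X} (hK : IsClosed K) {a : ℕ → ℕ} (ha : ∀ i, 0 < a i)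
    (hsub : FSinf a ⊆ {n | T^[n] w ∈ K}) : ∃ y ∈ K, StronglyProximal T w y := by
  obtain ⟨p, hp, hFS⟩ := exists_idempotent_ultrafilter_le_FS (a : Stream' ℕ)
  rw [← FSinf_eq_FS] at hFS
  have hw : Tendsto (fun n => T^[n] w) p (𝓝 _) := (p.map fun n => T^[n] w).le_nhds_lim
  have hp_le : (p : Filter ℕ) ≤ atTop :=
    Ultrafilter.coe_le_atTop_of_add_self hp (hFS.mono fun _ => pos_of_mem_FSinf ha)
  exact ⟨_, hK.mem_of_tendsto hw (hFS.mono hsub), stronglyProximal_iff_exists_ultrafilter.2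
    ⟨p, hp_le, hw, tendsto_iterate_self_of_add_self hT hp hw⟩⟩

theorem StronglyProximal.exists_FSinf_subset (hT : Continuous T) {x y : X}
    (h : StronglyProximal T x y) {V : Set X} (hV : V ∈ 𝓝 y) :
    ∃ q : ℕ → ℕ, (∀ i, 0 < q i) ∧ FSinf q ⊆ {n | T^[n] x ∈ V ∧ T^[n] y ∈ V} := by
  let L : Set (Ultrafilter ℕ) := {p | (p : Filter ℕ) ≤ atTop ∧
    Tendsto (fun n => T^[n] x) p (𝓝 y) ∧ Tendsto (fun n => T^[n] y) p (𝓝 y)}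
  have hL : IsClosed L := by
    simp only [L, tendsto_iff_comap]
    exact (Ultrafilter.isClosed_setOf_coe_le _).inter
      ((Ultrafilter.isClosed_setOf_coe_le _).inter (Ultrafilter.isClosed_setOf_coe_le _))
  have hLadd : ∀ p ∈ L, ∀ q ∈ L, p + q ∈ L := fun p hp q hq =>
    ⟨Ultrafilter.coe_add_le_atTop hq.1, hp.2.2.iterate_add hT hq.2.1,
      hp.2.2.iterate_add hT hq.2.2⟩
  obtain ⟨p, hpL, hp⟩ := exists_idempotent_in_compact_add_subsemigroup
    Ultrafilter.continuous_add_left L (stronglyProximal_iff_exists_ultrafilter.1 h) hL.isCompact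
    hLadd
  have hlarge : ∀ᶠ n in p, 0 < n ∧ T^[n] x ∈ V ∧ T^[n] y ∈ V :=
    (tendsto_atTop.1 hpL.1 1).and ((hpL.2.1.eventually_mem hV).and (hpL.2.2.eventually_mem hV))
  obtain ⟨q, hq⟩ := exists_FS_of_large p hp _ hlarge
  exact ⟨q, fun i => (hq (FS.singleton q i)).1, FSinf_eq_FS q ▸ fun n hn => (hq hn).2⟩

theorem exists_far_stronglyProximal_of_FSinf_separated [CompactSpace X] (hT : Continuous T)
    {δ : ℝ} {x z : X} (hxz : dist x z < δ / 2) {a : ℕ → ℕ} (ha : ∀ i, 0 < a i)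
    (hsep : FSinf a ⊆ {n | δ < dist (T^[n] x) (T^[n] z)}) :
    ∃ w ∈ ({x, z} : Set X), ∃ y, δ / 4 < dist w y ∧ StronglyProximal T w y := by
  obtain ⟨⟨u, v⟩, huv, hprox⟩ := exists_stronglyProximal_of_FSinf_subset (hT.prodMap hT)
    (w := (x, z)) (K := {q | δ ≤ dist q.1 q.2}) (isClosed_le continuous_const continuous_dist)
    ha fun n hn => by simpa [Prod.map_iterate] using (hsep hn).out.le
  obtain ⟨hxu, hzv⟩ := hprox.of_prodMap
  by_cases hfar : δ / 4 < dist x u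
  · exact ⟨x, .inl rfl, u, hfar, hxu⟩
  refine ⟨z, .inr rfl, v, ?_, hzv⟩
  linarith [dist_triangle4 u x z v, dist_comm u x, huv.out]

theorem StronglyProximal.exists_FSinf_separated (hT : Continuous T) {x y : X}
    (h : StronglyProximal T x y) (hy : Dense (Set.range fun n : ℕ => T^[n] y)) {δ : ℝ}
    (hδ : 0 < δ) (hxy : δ < dist x y) {U : Set X} (hU : IsOpen U) (hxU : x ∈ U) :
    ∃ z ∈ U, ∃ q : ℕ → ℕ, (∀ i, 0 < q i) ∧
      FSinf q ⊆ {n | δ / 2 < dist (T^[n] x) (T^[n] z)} := by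
  obtain ⟨_, ⟨k, rfl⟩, hkU, hkx⟩ := hy.exists_mem_open (hU.inter Metric.isOpen_ball)
    ⟨x, hxU, Metric.mem_ball_self (by positivity : 0 < δ / 4)⟩
  have hV : Metric.ball y (δ / 4) ∩ T^[k] ⁻¹' Metric.ball x (δ / 4) ∈ 𝓝 y :=
    inter_mem (Metric.ball_mem_nhds _ (by positivity))
      ((hT.iterate k).continuousAt.preimage_mem_nhds (Metric.isOpen_ball.mem_nhds hkx))
  obtain ⟨q, hq, hsub⟩ := h.exists_FSinf_subset hT hV
  refine ⟨_, hkU, q, hq, fun n hn => ?_⟩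
  obtain ⟨⟨hnx, -⟩, -, hny⟩ := hsub hn
  rw [Set.mem_preimage, Function.Commute.iterate_iterate_self T k n y, Metric.mem_ball] at hny
  rw [Metric.mem_ball] at hnx
  show δ / 2 < dist (T^[n] x) (T^[n] (T^[k] y))
  linarith [dist_triangle4 x (T^[n] (T^[k] y)) (T^[n] x) y, dist_comm x (T^[n] (T^[k] y)),
    dist_comm (T^[n] (T^[k] y)) (T^[n] x)]

end Dynamics

theorem strong_Fip_sensitive_iff_strongly_proximal_general {X : Type*} [MetricSpace X]
    [CompactSpace X] (T : X → X) (hT : Continuous T)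
    (hmin : ∀ x : X, Dense (Set.range fun n : ℕ => T^[n] x)) :
    (∃ δ > (0 : ℝ), ∀ U : Set X, IsOpen U → U.Nonempty →
        ∃ x ∈ U, ∃ z ∈ U, ∃ p : ℕ → ℕ, (∀ i, 0 < p i) ∧
          FSinf p ⊆ {n : ℕ | δ < dist (T^[n] x) (T^[n] z)}) ↔
      (∃ δ > (0 : ℝ), ∀ U : Set X, IsOpen U → U.Nonempty →
        ∃ x ∈ U, ∃ y : X, δ < dist x y ∧ StronglyProximal T x y) := by
  constructor
  · rintro ⟨δ, hδ, hsens⟩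
    refine ⟨δ / 4, by positivity, fun U hU ⟨u₀, hu₀⟩ => ?_⟩
    obtain ⟨x, ⟨hxU, hx⟩, z, ⟨hzU, hz⟩, a, ha, hsep⟩ := hsens (U ∩ Metric.ball u₀ (δ / 4))
      (hU.inter Metric.isOpen_ball) ⟨u₀, hu₀, Metric.mem_ball_self (by positivity)⟩
    have hxz : dist x z < δ / 2 := by
      rw [Metric.mem_ball] at hx hz
      linarith [dist_triangle_right x z u₀]
    obtain ⟨w, hw, hfar⟩ := exists_far_stronglyProximal_of_FSinf_separated hT hxz ha hsep
    obtain rfl | rfl := hw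
    exacts [⟨w, hxU, hfar⟩, ⟨w, hzU, hfar⟩]
  · rintro ⟨δ, hδ, hprox⟩
    refine ⟨δ / 2, by positivity, fun U hU hUne => ?_⟩
    obtain ⟨x, hxU, y, hxy, hsp⟩ := hprox U hU hUne
    exact ⟨x, hxU, hsp.exists_FSinf_separated hT (hmin y) hδ hxy hU hxU⟩

/-- A minimal system is strongly `F_ip`-sensitive iff there is `δ > 0` such that every
nonempty open set contains a point `x` which is strongly proximal to some point `y` with
`d(x,y) > δ`. -/
theorem strong_Fip_sensitive_iff_strongly_proximal {X : Type*} [MetricSpace X]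
    [CompactSpace X] (T : X → X) (hT : Continuous T) (hTs : Function.Surjective T)
    (hmin : ∀ x : X, Dense (Set.range fun n : ℕ => T^[n] x)) :
    (∃ δ > (0 : ℝ), ∀ U : Set X, IsOpen U → U.Nonempty →
        ∃ x ∈ U, ∃ z ∈ U, ∃ p : ℕ → ℕ, (∀ i, 0 < p i) ∧
          FSinf p ⊆ {n : ℕ | δ < dist (T^[n] x) (T^[n] z)}) ↔
      (∃ δ > (0 : ℝ), ∀ U : Set X, IsOpen U → U.Nonempty →
        ∃ x ∈ U, ∃ y : X, δ < dist x y ∧ StronglyProximal T x y) :=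
  strong_Fip_sensitive_iff_strongly_proximal_general T hT hmin
end

section
/- Let π : (X,T) → (Y,S) be a proximal extension of minimal systems. If (Y,S) is not strongly F_t-sensitive, then (X,T) is not strongly F_t-sensitive. -/
/-- A set of nonnegative integers is thick if it contains arbitrarily long blocks of
consecutive integers. -/
def IsThick (A : Set ℕ) : Prop :=
  ∀ l : ℕ, ∃ m : ℕ, ∀ i ≤ l, m + i ∈ A

/-- If `π : (X,T) → (Y,S)` is a proximal extension of minimal systems and `(Y,S)` is not
strongly `F_t`-sensitive, then neither is `(X,T)`. -/
theorem not_strong_Ft_sensitive_of_proximal_ext {X Y : Type*} [MetricSpace X]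
    [CompactSpace X] [MetricSpace Y] [CompactSpace Y]
    (T : X → X) (hT : Continuous T) (hTs : Function.Surjective T)
    (S : Y → Y) (hS : Continuous S) (hSs : Function.Surjective S)
    (hminX : ∀ x : X, Dense (Set.range fun n : ℕ => T^[n] x))
    (hminY : ∀ y : Y, Dense (Set.range fun n : ℕ => S^[n] y))
    (π : X → Y) (hπc : Continuous π) (hπs : Function.Surjective π)
    (hcomm : π ∘ T = S ∘ π)
    (hprox : ∀ x₁ x₂ : X, π x₁ = π x₂ →
      ∀ ε > (0 : ℝ), ∃ n : ℕ, dist (T^[n] x₁) (T^[n] x₂) < ε)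
    (hY : ¬ ∃ δ > (0 : ℝ), ∀ V : Set Y, IsOpen V → V.Nonempty →
      ∃ y₁ ∈ V, ∃ y₂ ∈ V, IsThick {n : ℕ | δ < dist (S^[n] y₁) (S^[n] y₂)}) :
    ¬ ∃ δ > (0 : ℝ), ∀ U : Set X, IsOpen U → U.Nonempty →
      ∃ x₁ ∈ U, ∃ x₂ ∈ U, IsThick {n : ℕ | δ < dist (T^[n] x₁) (T^[n] x₂)} := by
  rintro ⟨δ, hδ, hsens⟩
  -- semiconjugacy for iterates
  have hsemi : ∀ (n : ℕ) (x : X), π (T^[n] x) = S^[n] (π x) := by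
    have h : Function.Semiconj π T S := fun a => congrFun hcomm a
    intro n x
    exact (h.iterate_right n) x
  have hcont : ∀ n : ℕ, Continuous fun p : X × X => dist (T^[n] p.1) (T^[n] p.2) :=
    fun n => ((hT.iterate n).comp continuous_fst).dist ((hT.iterate n).comp continuous_snd)
  -- Step 1: uniform proximality
  obtain ⟨N, hN⟩ : ∃ N : ℕ, ∀ x₁ x₂ : X, π x₁ = π x₂ →
      ∃ n ≤ N, dist (T^[n] x₁) (T^[n] x₂) < δ := by
    have hRcomp : IsCompact {p : X × X | π p.1 = π p.2} :=
      (isClosed_eq (hπc.comp continuous_fst) (hπc.comp continuous_snd)).isCompact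
    have hcover : {p : X × X | π p.1 = π p.2} ⊆
        ⋃ n : ℕ, {p : X × X | dist (T^[n] p.1) (T^[n] p.2) < δ} := by
      intro p hp
      obtain ⟨n, hn⟩ := hprox p.1 p.2 hp δ hδ
      exact Set.mem_iUnion.mpr ⟨n, hn⟩
    obtain ⟨s, hs⟩ := hRcomp.elim_finite_subcover _
      (fun n => isOpen_lt (hcont n) continuous_const) hcover
    refine ⟨s.sup id, fun x₁ x₂ hx => ?_⟩
    have := hs (show (x₁, x₂) ∈ {p : X × X | π p.1 = π p.2} from hx)
    simp only [Set.mem_iUnion, Set.mem_setOf_eq] at this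
    obtain ⟨n, hns, hn⟩ := this
    exact ⟨n, Finset.le_sup (f := id) hns, hn⟩
  -- Step 2: extend to nearby fibers by compactness
  obtain ⟨η, hη, hB⟩ : ∃ η > (0 : ℝ), ∀ x₁ x₂ : X, dist (π x₁) (π x₂) ≤ η →
      ∃ n ≤ N, dist (T^[n] x₁) (T^[n] x₂) < δ := by
    set K : Set (X × X) := {p | ∀ n ≤ N, δ ≤ dist (T^[n] p.1) (T^[n] p.2)} with hKdef
    have hKclosed : IsClosed K := by
      have : K = ⋂ (n : ℕ) (_ : n ≤ N), {p : X × X | δ ≤ dist (T^[n] p.1) (T^[n] p.2)} := by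
        ext p; simp [hKdef, Set.mem_iInter]
      rw [this]
      exact isClosed_iInter fun n => isClosed_iInter fun _ =>
        isClosed_le continuous_const (hcont n)
    by_cases hK : K.Nonempty
    · obtain ⟨p₀, hp₀, hmin⟩ := hKclosed.isCompact.exists_isMinOn hK
        (((hπc.comp continuous_fst).dist (hπc.comp continuous_snd)).continuousOn)
      have hpos : 0 < dist (π p₀.1) (π p₀.2) := by
        rcases lt_or_eq_of_le (dist_nonneg (x := π p₀.1) (y := π p₀.2)) with h | h
        · exact h
        · exfalso
          obtain ⟨n, hn, hlt⟩ := hN p₀.1 p₀.2 (dist_eq_zero.mp h.symm)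
          exact absurd (hp₀ n hn) (not_le.mpr hlt)
      refine ⟨dist (π p₀.1) (π p₀.2) / 2, by linarith, fun x₁ x₂ hd => ?_⟩
      by_contra h
      push_neg at h
      have hmem : (x₁, x₂) ∈ K := fun n hn => h n hn
      have := hmin hmem
      simp only [Set.mem_setOf_eq, Function.comp_apply] at this
      linarith
    · refine ⟨1, one_pos, fun x₁ x₂ _ => ?_⟩
      by_contra h
      push_neg at h
      exact hK ⟨(x₁, x₂), fun n hn => h n hn⟩
  -- Step 3: use non-sensitivity of Y with constant η
  have hYη : ¬ ∀ V : Set Y, IsOpen V → V.Nonempty →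
      ∃ y₁ ∈ V, ∃ y₂ ∈ V, IsThick {n : ℕ | η < dist (S^[n] y₁) (S^[n] y₂)} :=
    fun h => hY ⟨η, hη, h⟩
  push_neg at hYη
  obtain ⟨V, hVopen, hVne, hVpairs⟩ := hYη
  have hUopen : IsOpen (π ⁻¹' V) := hVopen.preimage hπc
  have hUne : (π ⁻¹' V).Nonempty := by
    obtain ⟨y, hy⟩ := hVne
    obtain ⟨x, rfl⟩ := hπs y
    exact ⟨x, hy⟩
  obtain ⟨x₁, hx₁, x₂, hx₂, hthick⟩ := hsens (π ⁻¹' V) hUopen hUne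
  have hnB := hVpairs (π x₁) hx₁ (π x₂) hx₂
  unfold IsThick at hnB
  push_neg at hnB
  simp only [Set.mem_setOf_eq, not_lt] at hnB
  obtain ⟨l, hl⟩ := hnB
  obtain ⟨m, hm⟩ := hthick (l + N)
  obtain ⟨i, hi, hdist⟩ := hl m
  rw [← hsemi, ← hsemi] at hdist
  obtain ⟨n, hn, hlt⟩ := hB _ _ hdist
  have key := hm (i + n) (by omega)
  simp only [Set.mem_setOf_eq] at key
  have e : ∀ x : X, T^[m + (i + n)] x = T^[n] (T^[m + i] x) := by
    intro x
    rw [show m + (i + n) = n + (m + i) by omega, Function.iterate_add_apply]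
  rw [e, e] at key
  linarith
end

section
/- Let (X,T) be a minimal invertible system. If there exist x ≠ y in X such that (x,y) is proximal for T^{−1} and inf_{n ∈ ℤ≥0} d(Tⁿx, Tⁿy) > 0, then (X,T) is strongly F_t-sensitive. -/
/-- Let `(X,T)` be a minimal invertible system. If there are `x ≠ y` which are proximal
for `T⁻¹` and with `inf_n d(Tⁿx,Tⁿy) > 0`, then `(X,T)` is strongly `F_t`-sensitive. -/
theorem strong_Ft_sensitive_of_backward_proximal {X : Type*} [MetricSpace X]
    [CompactSpace X] (T : X ≃ₜ X)
    (hmin : ∀ x : X, Dense (Set.range fun n : ℕ => (⇑T)^[n] x))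
    (x y : X) (hxy : x ≠ y)
    (hbp : ∀ ε > (0 : ℝ), ∃ n : ℕ, dist ((⇑T.symm)^[n] x) ((⇑T.symm)^[n] y) < ε)
    (hdist : 0 < ⨅ n : ℕ, dist ((⇑T)^[n] x) ((⇑T)^[n] y)) :
    ∃ δ > (0 : ℝ), ∀ U : Set X, IsOpen U → U.Nonempty →
      ∃ z₁ ∈ U, ∃ z₂ ∈ U, IsThick {m : ℕ | δ < dist ((⇑T)^[m] z₁) ((⇑T)^[m] z₂)} := by
  set c := ⨅ n : ℕ, dist ((⇑T)^[n] x) ((⇑T)^[n] y) with hc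
  have hbdd : BddBelow (Set.range fun n : ℕ => dist ((⇑T)^[n] x) ((⇑T)^[n] y)) :=
    ⟨0, by rintro _ ⟨n, rfl⟩; exact dist_nonneg⟩
  have hcle : ∀ s : ℕ, c ≤ dist ((⇑T)^[s] x) ((⇑T)^[s] y) := fun s => ciInf_le hbdd s
  have hli : Function.LeftInverse ⇑T ⇑T.symm := T.apply_symm_apply
  refine ⟨c / 2, by linarith, fun U hU hUne => ?_⟩
  have hsel : ∀ k : ℕ, ∃ n : ℕ,
      dist ((⇑T.symm)^[n] x) ((⇑T.symm)^[n] y) < 1 / (k + 1) :=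
    fun k => hbp _ (by positivity)
  choose ν hν using hsel
  set u : ℕ → X × X := fun k => ((⇑T.symm)^[ν k] x, (⇑T.symm)^[ν k] y) with hu
  obtain ⟨w, -, φ, hφ, hlim⟩ := isCompact_univ.tendsto_subseq (x := u) fun n => Set.mem_univ _
  have hlim1 : Filter.Tendsto (fun k => (u (φ k)).1) Filter.atTop (nhds w.1) :=
    (continuous_fst.tendsto w).comp hlim
  have hlim2 : Filter.Tendsto (fun k => (u (φ k)).2) Filter.atTop (nhds w.2) :=
    (continuous_snd.tendsto w).comp hlim
  have hweq : w.1 = w.2 := by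
    have h1 : Filter.Tendsto (fun k => dist (u (φ k)).1 (u (φ k)).2) Filter.atTop
        (nhds (dist w.1 w.2)) := hlim1.dist hlim2
    have h2 : Filter.Tendsto (fun k => dist (u (φ k)).1 (u (φ k)).2) Filter.atTop (nhds 0) := by
      apply squeeze_zero (fun k => dist_nonneg) (g := fun k : ℕ => 1 / (k + 1 : ℝ))
        (fun k => ?_) tendsto_one_div_add_atTop_nhds_zero_nat
      calc dist (u (φ k)).1 (u (φ k)).2 ≤ 1 / (φ k + 1 : ℝ) := (hν (φ k)).le
        _ ≤ 1 / (k + 1 : ℝ) := by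
            apply one_div_le_one_div_of_le (by positivity)
            have h : (k : ℝ) ≤ (φ k : ℝ) := Nat.cast_le.mpr hφ.le_apply
            linarith
    exact eq_of_dist_eq_zero (tendsto_nhds_unique h1 h2)
  obtain ⟨p, ⟨j, rfl⟩, hjU⟩ := (hmin w.1).exists_mem_open hU hUne
  have hcont : Continuous ((⇑T)^[j]) := T.continuous.iterate j
  have hT1 : Filter.Tendsto (fun k => (⇑T)^[j] (u (φ k)).1) Filter.atTop
      (nhds ((⇑T)^[j] w.1)) := (hcont.tendsto _).comp hlim1
  have hT2 : Filter.Tendsto (fun k => (⇑T)^[j] (u (φ k)).2) Filter.atTop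
      (nhds ((⇑T)^[j] w.1)) := by rw [hweq]; exact (hcont.tendsto _).comp hlim2
  have hev := (hT1.eventually (hU.mem_nhds hjU)).and (hT2.eventually (hU.mem_nhds hjU))
  obtain ⟨k, hk1, hk2⟩ := hev.exists
  set n := ν (φ k) with hn
  refine ⟨(⇑T)^[j] ((⇑T.symm)^[n] x), hk1, (⇑T)^[j] ((⇑T.symm)^[n] y), hk2, fun l => ⟨n, ?_⟩⟩
  intro i hi
  have key : ∀ p : X, (⇑T)^[n + i] ((⇑T)^[j] ((⇑T.symm)^[n] p)) = (⇑T)^[i + j] p := by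
    intro p
    rw [← Function.iterate_add_apply]
    have h1 : n + i + j = i + j + n := by ring
    rw [h1, Function.iterate_add_apply, (hli.iterate n) p]
  show c / 2 < dist ((⇑T)^[n + i] _) ((⇑T)^[n + i] _)
  rw [key x, key y]
  linarith [hcle (i + j)]
end

section
/- Let π : X → Y be a factor map between minimal systems. If the proximal relation P(X) is closed in X × X, then P(Y) is closed in Y × Y. -/
/-
Let `βℕ` act on a compact system by `p · z = p-lim Fⁿ z`; then `(p + q) · z = p · (q · z)`, and
a pair is proximal iff `p · z₁ = p · z₂` for some `p`. Given a proximal pair `(y₁, y₂)` in `Y`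
with `q · y₁ = q · y₂`, minimality of `Y` makes `{p ∈ βℕ + q | p · y₂ = y₂}` a nonempty closed
subsemigroup of `βℕ`, so it contains an idempotent `v`, and `v · y₁ = y₂`. For `x₁` over `y₁`
the point `x₂ = v · x₁` lies over `y₂` and `v · x₂ = v · x₁`, so `(x₁, x₂)` is proximal.
Hence `P(Y) = (π × π)(P(X))`, a continuous image of a compact set.
-/

open Filter Set Topology Function

attribute [local instance] Ultrafilter.add Ultrafilter.addSemigroup

section UltrafilterAction

variable {Z : Type*} [TopologicalSpace Z] [T2Space Z]

noncomputable def iterateLim (F : Z → Z) (p : Ultrafilter ℕ) (z : Z) : Z :=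
  Ultrafilter.extend (fun n => F^[n] z) p

theorem iterateLim_pure (F : Z → Z) (n : ℕ) (z : Z) : iterateLim F (pure n) z = F^[n] z :=
  ultrafilter_extend_pure _ n

variable [CompactSpace Z]

theorem tendsto_iterate_iterateLim (F : Z → Z) (p : Ultrafilter ℕ) (z : Z) :
    Tendsto (fun n => F^[n] z) p (𝓝 (iterateLim F p z)) :=
  ultrafilter_extend_eq_iff.mp rfl

theorem continuous_iterateLim (F : Z → Z) (z : Z) : Continuous fun p => iterateLim F p z :=
  continuous_ultrafilter_extend _

theorem iterateLim_add {F : Z → Z} (hF : Continuous F) (p q : Ultrafilter ℕ) (z : Z) :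
    iterateLim F (p + q) z = iterateLim F p (iterateLim F q z) := by
  refine tendsto_nhds_unique (tendsto_iterate_iterateLim F (p + q) z) ?_
  refine tendsto_nhds.2 fun U hU hmem => ?_
  show ∀ᶠ k in ↑(p + q), F^[k] z ∈ U
  rw [Ultrafilter.eventually_add]
  filter_upwards [tendsto_iterate_iterateLim F p _ (hU.mem_nhds hmem)] with m hm
  have hlim := ((hF.iterate m).tendsto _).comp (tendsto_iterate_iterateLim F q z)
  filter_upwards [hlim (hU.mem_nhds hm)] with n hn
  rwa [iterate_add_apply]

theorem iterateLim_semiconj {W : Type*} [TopologicalSpace W] [CompactSpace W] [T2Space W]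
    {F : Z → Z} {G : W → W} {π : Z → W} (hπ : Continuous π) (h : Semiconj π F G)
    (p : Ultrafilter ℕ) (z : Z) : π (iterateLim F p z) = iterateLim G p (π z) := by
  refine tendsto_nhds_unique ((hπ.tendsto _).comp (tendsto_iterate_iterateLim F p z)) ?_
  simpa only [comp_def, (h.iterate_right _).eq] using tendsto_iterate_iterateLim G p (π z)

theorem range_iterateLim (F : Z → Z) (z : Z) :
    range (fun p => iterateLim F p z) = closure (range fun n => F^[n] z) := by
  refine (range_subset_iff.2 fun p => ?_).antisymm ?_
  · exact mem_closure_of_tendsto (tendsto_iterate_iterateLim F p z)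
      (Eventually.of_forall fun n => mem_range_self n)
  · refine closure_minimal ?_ (isCompact_range (continuous_iterateLim F z)).isClosed
    rintro _ ⟨n, rfl⟩
    exact ⟨pure n, iterateLim_pure F n z⟩

theorem exists_idempotent_add_right_iterateLim_eq {F : Z → Z} (hF : Continuous F)
    (q : Ultrafilter ℕ) {z : Z} (hz : z ∈ range fun p => iterateLim F p (iterateLim F q z)) :
    ∃ s : Ultrafilter ℕ, (s + q) + (s + q) = s + q ∧ iterateLim F (s + q) z = z := by
  let J := range (· + q) ∩ {p | iterateLim F p z = z}
  have hJ : J.Nonempty := by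
    obtain ⟨r, hr⟩ := hz
    exact ⟨r + q, mem_range_self r, by rwa [mem_ofPred_eq, iterateLim_add hF]⟩
  have hJc : IsCompact J :=
    (isCompact_range (Ultrafilter.continuous_add_left q)).inter_right
      (isClosed_singleton.preimage (continuous_iterateLim F z))
  have hJadd : ∀ a ∈ J, ∀ b ∈ J, a + b ∈ J := by
    rintro _ ⟨⟨s, rfl⟩, ha⟩ _ ⟨⟨t, rfl⟩, hb⟩
    refine ⟨⟨s + q + t, add_assoc _ _ _⟩, ?_⟩
    rwa [mem_ofPred_eq, iterateLim_add hF, hb]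
  obtain ⟨_, ⟨⟨s, rfl⟩, hs⟩, hss⟩ := exists_idempotent_in_compact_add_subsemigroup
    Ultrafilter.continuous_add_left J hJ hJc hJadd
  exact ⟨s, hss, hs⟩

theorem exists_idempotent_iterateLim_eq {F : Z → Z} (hF : Continuous F)
    (hmin : ∀ z : Z, Dense (range fun n : ℕ => F^[n] z)) {q : Ultrafilter ℕ} {z₁ z₂ : Z}
    (hq : iterateLim F q z₁ = iterateLim F q z₂) :
    ∃ v : Ultrafilter ℕ, v + v = v ∧ iterateLim F v z₁ = z₂ := by
  have hz₂ : z₂ ∈ range fun p => iterateLim F p (iterateLim F q z₂) := by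
    rw [range_iterateLim, (hmin _).closure_eq]
    exact mem_univ z₂
  obtain ⟨s, hss, hs⟩ := exists_idempotent_add_right_iterateLim_eq hF q hz₂
  refine ⟨s + q, hss, ?_⟩
  rwa [iterateLim_add hF, hq, ← iterateLim_add hF]

end UltrafilterAction

section Proximal

variable {Z : Type*} [MetricSpace Z]

def Proximal (F : Z → Z) (z₁ z₂ : Z) : Prop :=
  ∀ ε > (0 : ℝ), ∃ n : ℕ, dist (F^[n] z₁) (F^[n] z₂) < ε

theorem proximal_iff_exists_tendsto {F : Z → Z} {z₁ z₂ : Z} :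
    Proximal F z₁ z₂ ↔ ∃ p : Ultrafilter ℕ,
      Tendsto (fun n => dist (F^[n] z₁) (F^[n] z₂)) p (𝓝 0) := by
  set d := fun n => dist (F^[n] z₁) (F^[n] z₂)
  constructor
  · intro h
    have : (comap d (𝓝 0)).NeBot := (Metric.nhds_basis_ball.comap d).neBot_iff.2 fun hε =>
      let ⟨n, hn⟩ := h _ hε
      ⟨n, by simpa [d, abs_of_nonneg dist_nonneg] using hn⟩
    exact ⟨Ultrafilter.of _, tendsto_iff_comap.2 (Ultrafilter.of_le _)⟩
  · rintro ⟨p, hp⟩ ε hε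
    exact (hp.eventually (gt_mem_nhds hε)).exists

variable [CompactSpace Z]

theorem iterateLim_eq_iff_tendsto_dist {F : Z → Z} {p : Ultrafilter ℕ} {z₁ z₂ : Z} :
    iterateLim F p z₁ = iterateLim F p z₂ ↔
      Tendsto (fun n => dist (F^[n] z₁) (F^[n] z₂)) p (𝓝 0) := by
  have h := (tendsto_iterate_iterateLim F p z₁).dist (tendsto_iterate_iterateLim F p z₂)
  refine ⟨fun heq => ?_, fun h0 => dist_eq_zero.1 (tendsto_nhds_unique h h0)⟩
  rwa [heq, dist_self] at h

theorem proximal_iff_exists_iterateLim_eq {F : Z → Z} {z₁ z₂ : Z} :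
    Proximal F z₁ z₂ ↔ ∃ p : Ultrafilter ℕ, iterateLim F p z₁ = iterateLim F p z₂ := by
  simp only [iterateLim_eq_iff_tendsto_dist, proximal_iff_exists_tendsto]

theorem Proximal.map {W : Type*} [MetricSpace W] [CompactSpace W] {F : Z → Z} {G : W → W}
    {π : Z → W} (hπ : Continuous π) (h : Semiconj π F G) {z₁ z₂ : Z}
    (hz : Proximal F z₁ z₂) : Proximal G (π z₁) (π z₂) := by
  obtain ⟨p, hp⟩ := proximal_iff_exists_iterateLim_eq.1 hz
  exact proximal_iff_exists_iterateLim_eq.2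
    ⟨p, by rw [← iterateLim_semiconj hπ h, hp, iterateLim_semiconj hπ h]⟩

theorem proximal_iterateLim_of_add_self {F : Z → Z} (hF : Continuous F) {v : Ultrafilter ℕ}
    (hv : v + v = v) (z : Z) : Proximal F z (iterateLim F v z) :=
  proximal_iff_exists_iterateLim_eq.2 ⟨v, by rw [← iterateLim_add hF, hv]⟩

variable {W : Type*} [MetricSpace W] [CompactSpace W] {F : Z → Z} {G : W → W} {π : Z → W}

theorem exists_proximal_lift (hF : Continuous F) (hG : Continuous G)
    (hmin : ∀ w : W, Dense (range fun n : ℕ => G^[n] w)) (hπ : Continuous π)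
    (hπs : Surjective π) (h : Semiconj π F G) {w₁ w₂ : W} (hw : Proximal G w₁ w₂) :
    ∃ z₁ z₂, Proximal F z₁ z₂ ∧ π z₁ = w₁ ∧ π z₂ = w₂ := by
  obtain ⟨q, hq⟩ := proximal_iff_exists_iterateLim_eq.1 hw
  obtain ⟨v, hvv, hv⟩ := exists_idempotent_iterateLim_eq hG hmin hq
  obtain ⟨z₁, rfl⟩ := hπs w₁
  exact ⟨z₁, iterateLim F v z₁, proximal_iterateLim_of_add_self hF hvv z₁, rfl,
    by rw [iterateLim_semiconj hπ h, hv]⟩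

theorem image_prodMap_proximal (hF : Continuous F) (hG : Continuous G)
    (hmin : ∀ w : W, Dense (range fun n : ℕ => G^[n] w)) (hπ : Continuous π)
    (hπs : Surjective π) (h : Semiconj π F G) :
    Prod.map π π '' {p : Z × Z | Proximal F p.1 p.2} = {q : W × W | Proximal G q.1 q.2} := by
  ext ⟨w₁, w₂⟩
  constructor
  · rintro ⟨⟨z₁, z₂⟩, hz, hzw⟩
    cases hzw
    exact hz.map hπ h
  · intro hw
    obtain ⟨z₁, z₂, hz, rfl, rfl⟩ := exists_proximal_lift hF hG hmin hπ hπs h hw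
    exact ⟨(z₁, z₂), hz, rfl⟩

end Proximal

theorem prox_closed_factor_general {X Y : Type*} [MetricSpace X] [CompactSpace X]
    [MetricSpace Y] [CompactSpace Y]
    (T : X → X) (hT : Continuous T)
    (S : Y → Y) (hS : Continuous S)
    (hminY : ∀ y : Y, Dense (Set.range fun n : ℕ => S^[n] y))
    (π : X → Y) (hπc : Continuous π) (hπs : Function.Surjective π)
    (hcomm : π ∘ T = S ∘ π)
    (hPX : IsClosed {p : X × X |
      ∀ ε > (0 : ℝ), ∃ n : ℕ, dist (T^[n] p.1) (T^[n] p.2) < ε}) :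
    IsClosed {q : Y × Y |
      ∀ ε > (0 : ℝ), ∃ n : ℕ, dist (S^[n] q.1) (S^[n] q.2) < ε} := by
  have h : Semiconj π T S := fun x => congrFun hcomm x
  change IsClosed {q : Y × Y | Proximal S q.1 q.2}
  rw [← image_prodMap_proximal hT hS hminY hπc hπs h]
  exact (hPX.isCompact.image (hπc.prodMap hπc)).isClosed

/-- If `π : X → Y` is a factor map between minimal systems and the proximal relation
`P(X)` is closed, then `P(Y)` is closed. -/
theorem prox_closed_factor {X Y : Type*} [MetricSpace X] [CompactSpace X]
    [MetricSpace Y] [CompactSpace Y]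
    (T : X → X) (hT : Continuous T) (hTs : Function.Surjective T)
    (S : Y → Y) (hS : Continuous S) (hSs : Function.Surjective S)
    (hminX : ∀ x : X, Dense (Set.range fun n : ℕ => T^[n] x))
    (hminY : ∀ y : Y, Dense (Set.range fun n : ℕ => S^[n] y))
    (π : X → Y) (hπc : Continuous π) (hπs : Function.Surjective π)
    (hcomm : π ∘ T = S ∘ π)
    (hPX : IsClosed {p : X × X |
      ∀ ε > (0 : ℝ), ∃ n : ℕ, dist (T^[n] p.1) (T^[n] p.2) < ε}) :
    IsClosed {q : Y × Y |
      ∀ ε > (0 : ℝ), ∃ n : ℕ, dist (S^[n] q.1) (S^[n] q.2) < ε} :=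
  prox_closed_factor_general T hT S hS hminY π hπc hπs hcomm hPX
end

section
/- Let π : X → Y be a proximal factor map between minimal systems. If P(Y) is closed, then P(X) is closed. -/
/-- If `π : X → Y` is a proximal factor map between minimal systems and the proximal
relation `P(Y)` is closed, then `P(X)` is closed. -/
theorem prox_closed_lift {X Y : Type*} [MetricSpace X] [CompactSpace X]
    [MetricSpace Y] [CompactSpace Y]
    (T : X → X) (hT : Continuous T) (hTs : Function.Surjective T)
    (S : Y → Y) (hS : Continuous S) (hSs : Function.Surjective S)
    (hminX : ∀ x : X, Dense (Set.range fun n : ℕ => T^[n] x))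
    (hminY : ∀ y : Y, Dense (Set.range fun n : ℕ => S^[n] y))
    (π : X → Y) (hπc : Continuous π) (hπs : Function.Surjective π)
    (hcomm : π ∘ T = S ∘ π)
    (hprox : ∀ x₁ x₂ : X, π x₁ = π x₂ →
      ∀ ε > (0 : ℝ), ∃ n : ℕ, dist (T^[n] x₁) (T^[n] x₂) < ε)
    (hPY : IsClosed {q : Y × Y |
      ∀ ε > (0 : ℝ), ∃ n : ℕ, dist (S^[n] q.1) (S^[n] q.2) < ε}) :
    IsClosed {p : X × X |
      ∀ ε > (0 : ℝ), ∃ n : ℕ, dist (T^[n] p.1) (T^[n] p.2) < ε} := by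
  have hsc : Function.Semiconj π T S := fun a => congrFun hcomm a
  have hcomm' : ∀ (n : ℕ) (a : X), π (T^[n] a) = S^[n] (π a) :=
    fun n a => (hsc.iterate_right n) a
  -- π maps proximal pairs to proximal pairs
  have hmapP : ∀ a b : X, (∀ ε > (0:ℝ), ∃ n, dist (T^[n] a) (T^[n] b) < ε) →
      ∀ ε > (0:ℝ), ∃ n, dist (S^[n] (π a)) (S^[n] (π b)) < ε := by
    intro a b hab ε hε
    obtain ⟨δ, hδ, hδ'⟩ := Metric.uniformContinuous_iff.1
      (CompactSpace.uniformContinuous_of_continuous hπc) ε hε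
    obtain ⟨n, hn⟩ := hab δ hδ
    exact ⟨n, by rw [← hcomm', ← hcomm']; exact hδ' hn⟩
  apply IsSeqClosed.isClosed
  intro p q hp hq
  -- Step 1: (π q.1, π q.2) is proximal
  have htend : Filter.Tendsto (fun k => (π (p k).1, π (p k).2)) Filter.atTop
      (nhds (π q.1, π q.2)) := by
    exact ((hπc.comp continuous_fst).prodMk (hπc.comp continuous_snd)).continuousAt.tendsto.comp hq
  have hπq : ∀ ε > (0:ℝ), ∃ n, dist (S^[n] (π q.1)) (S^[n] (π q.2)) < ε := by
    have := hPY.mem_of_tendsto htend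
      (Filter.Eventually.of_forall fun k => hmapP _ _ (hp k))
    exact this
  -- Step 2: choose iterates bringing π q.1, π q.2 together
  have hsel : ∀ k : ℕ, ∃ n, dist (S^[n] (π q.1)) (S^[n] (π q.2)) < 1/(k+1) :=
    fun k => hπq _ (by positivity)
  choose ns hns using hsel
  obtain ⟨u, -, φ, hφ, hu⟩ := isCompact_univ.tendsto_subseq
    (x := fun k => (T^[ns k] q.1, T^[ns k] q.2)) (fun k => Set.mem_univ _)
  have hu1 : Filter.Tendsto (fun j => T^[ns (φ j)] q.1) Filter.atTop (nhds u.1) :=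
    (continuous_fst.tendsto u).comp hu
  have hu2 : Filter.Tendsto (fun j => T^[ns (φ j)] q.2) Filter.atTop (nhds u.2) :=
    (continuous_snd.tendsto u).comp hu
  -- π u.1 = π u.2
  have hπu : π u.1 = π u.2 := by
    have h1 : Filter.Tendsto
        (fun j => dist (π (T^[ns (φ j)] q.1)) (π (T^[ns (φ j)] q.2)))
        Filter.atTop (nhds (dist (π u.1) (π u.2))) :=
      (((hπc.tendsto _).comp hu1).dist ((hπc.tendsto _).comp hu2))
    have h2 : Filter.Tendsto
        (fun j => dist (π (T^[ns (φ j)] q.1)) (π (T^[ns (φ j)] q.2)))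
        Filter.atTop (nhds 0) := by
      refine squeeze_zero (g := fun j => 1/((φ j : ℝ)+1)) (fun j => dist_nonneg)
        (fun j => ?_)
        (tendsto_one_div_add_atTop_nhds_zero_nat.comp hφ.tendsto_atTop)
      rw [hcomm', hcomm']
      exact (hns (φ j)).le
    exact dist_eq_zero.1 (tendsto_nhds_unique h1 h2)
  have huP := hprox u.1 u.2 hπu
  -- Conclude: q is a proximal pair
  intro ε hε
  obtain ⟨m, hm⟩ := huP ε hε
  set d := dist (T^[m] u.1) (T^[m] u.2) with hd
  have hε' : (0:ℝ) < (ε - d)/2 := by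
    have : d < ε := hm
    linarith
  have h1 : ∀ᶠ j in Filter.atTop,
      dist (T^[m] (T^[ns (φ j)] q.1)) (T^[m] u.1) < (ε - d)/2 := by
    have := ((hT.iterate m).tendsto u.1).comp hu1
    exact (Metric.tendsto_nhds.1 this _ hε')
  have h2 : ∀ᶠ j in Filter.atTop,
      dist (T^[m] (T^[ns (φ j)] q.2)) (T^[m] u.2) < (ε - d)/2 := by
    have := ((hT.iterate m).tendsto u.2).comp hu2
    exact (Metric.tendsto_nhds.1 this _ hε')
  obtain ⟨j, hj1, hj2⟩ := (h1.and h2).exists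
  refine ⟨m + ns (φ j), ?_⟩
  rw [Function.iterate_add_apply, Function.iterate_add_apply]
  calc dist (T^[m] (T^[ns (φ j)] q.1)) (T^[m] (T^[ns (φ j)] q.2))
      ≤ dist (T^[m] (T^[ns (φ j)] q.1)) (T^[m] u.1) + dist (T^[m] u.1) (T^[m] u.2)
        + dist (T^[m] u.2) (T^[m] (T^[ns (φ j)] q.2)) := dist_triangle4 _ _ _ _
    _ < (ε - d)/2 + d + (ε - d)/2 := by
        rw [dist_comm (T^[m] u.2)]
        exact add_lt_add (add_lt_add_of_lt_of_le hj1 le_rfl) hj2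
    _ = ε := by ring
end

section
/- Let X be the inverse limit of a sequence of minimal systems (X_i, T_i) with factor maps φ_i : X_{i+1} → X_i. If the proximal relation P(X_i) is closed for every i, then P(X) is closed. -/
/-- The inverse limit of a sequence of systems `(X i, T i)` along factor maps
`φ i : X (i+1) → X i`. -/
def InvLimit {X : ℕ → Type*} (φ : ∀ i, X (i + 1) → X i) : Type _ :=
  {x : ∀ i, X i // ∀ i, φ i (x (i + 1)) = x i}

instance {X : ℕ → Type*} [∀ i, TopologicalSpace (X i)] (φ : ∀ i, X (i + 1) → X i) :
    TopologicalSpace (InvLimit φ) :=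
  instTopologicalSpaceSubtype

instance {X : ℕ → Type*} [∀ i, UniformSpace (X i)] (φ : ∀ i, X (i + 1) → X i) :
    UniformSpace (InvLimit φ) :=
  instUniformSpaceSubtype

/-- The induced transformation on the inverse limit. -/
def InvLimit.map {X : ℕ → Type*} {φ : ∀ i, X (i + 1) → X i} (T : ∀ i, X i → X i)
    (hφT : ∀ i, φ i ∘ T (i + 1) = T i ∘ φ i) : InvLimit φ → InvLimit φ :=
  fun x => ⟨fun i => T i (x.1 i),
    fun i => (congrFun (hφT i) (x.1 (i + 1))).trans (congrArg (T i) (x.2 i))⟩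

section Aux

variable {X : ℕ → Type*}

/-- Composite of the bonding maps from level `i + j` down to level `i`. -/
def chainMap (φ : ∀ i, X (i + 1) → X i) (i : ℕ) : ∀ j, X (i + j) → X i
  | 0 => id
  | (j + 1) => chainMap φ i j ∘ φ (i + j)

lemma chainMap_continuous [∀ i, TopologicalSpace (X i)] (φ : ∀ i, X (i + 1) → X i)
    (hφc : ∀ i, Continuous (φ i)) (i j : ℕ) : Continuous (chainMap φ i j) := by
  induction j with
  | zero => exact continuous_id
  | succ j ih => exact ih.comp (hφc _)

lemma chainMap_thread (φ : ∀ i, X (i + 1) → X i) (x : InvLimit φ) (i j : ℕ) :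
    chainMap φ i j (x.1 (i + j)) = x.1 i := by
  induction j with
  | zero => rfl
  | succ j ih =>
    show chainMap φ i j (φ (i + j) (x.1 (i + j + 1))) = x.1 i
    rw [x.2 (i + j)]; exact ih

lemma map_iterate_coord {φ : ∀ i, X (i + 1) → X i} (T : ∀ i, X i → X i)
    (hφT : ∀ i, φ i ∘ T (i + 1) = T i ∘ φ i) (n : ℕ) (x : InvLimit φ) (i : ℕ) :
    ((InvLimit.map T hφT)^[n] x).1 i = (T i)^[n] (x.1 i) := by
  induction n with
  | zero => rfl
  | succ n ih =>
    rw [Function.iterate_succ_apply', Function.iterate_succ_apply']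
    exact congrArg (T i) ih

lemma uniformity_invLimit [∀ i, UniformSpace (X i)] (φ : ∀ i, X (i + 1) → X i) :
    (uniformity (InvLimit φ) : Filter _) = ⨅ j,
      Filter.comap (fun p : InvLimit φ × InvLimit φ => (p.1.1 j, p.2.1 j))
        (uniformity (X j)) := by
  have h1 : (uniformity (InvLimit φ) : Filter _) =
      Filter.comap (fun q : InvLimit φ × InvLimit φ => (q.1.1, q.2.1))
        (uniformity (∀ i, X i)) :=
    uniformity_subtype (p := fun x : ∀ i, X i => ∀ i, φ i (x (i + 1)) = x i)
  rw [h1, Pi.uniformity, Filter.comap_iInf]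
  congr 1
  funext j
  rw [Filter.comap_comap]
  rfl

end Aux

/-- If the proximal relation of each `X i` is closed, then the proximal relation of the
inverse limit is closed.  (On the inverse limit, which is a compact metrizable space,
proximality is expressed via the canonical uniformity.) -/
theorem prox_closed_invLimit (X : ℕ → Type*) [∀ i, MetricSpace (X i)]
    [∀ i, CompactSpace (X i)]
    (T : ∀ i, X i → X i) (hTc : ∀ i, Continuous (T i)) (hTs : ∀ i, Function.Surjective (T i))
    (hmin : ∀ i, ∀ x : X i, Dense (Set.range fun n : ℕ => (T i)^[n] x))
    (φ : ∀ i, X (i + 1) → X i) (hφc : ∀ i, Continuous (φ i))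
    (hφs : ∀ i, Function.Surjective (φ i))
    (hφT : ∀ i, φ i ∘ T (i + 1) = T i ∘ φ i)
    (hP : ∀ i, IsClosed {p : X i × X i |
      ∀ ε > (0 : ℝ), ∃ n : ℕ, dist ((T i)^[n] p.1) ((T i)^[n] p.2) < ε}) :
    IsClosed {p : InvLimit φ × InvLimit φ |
      ∀ V ∈ uniformity (InvLimit φ), ∃ n : ℕ,
        ((InvLimit.map T hφT)^[n] p.1, (InvLimit.map T hφT)^[n] p.2) ∈ V} := by
  set F : ℕ → Filter (InvLimit φ × InvLimit φ) :=
    fun j => Filter.comap (fun p : InvLimit φ × InvLimit φ => (p.1.1 j, p.2.1 j))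
      (uniformity (X j)) with hF
  have hUnif : (uniformity (InvLimit φ) : Filter _) = ⨅ j, F j := uniformity_invLimit φ
  -- antitone
  have hanti : Antitone F := by
    intro i j hij
    obtain ⟨k, rfl⟩ := Nat.le.dest hij
    have huc : UniformContinuous (chainMap φ i k) :=
      CompactSpace.uniformContinuous_of_continuous (chainMap_continuous φ hφc i k)
    have heq : (fun p : InvLimit φ × InvLimit φ => (p.1.1 i, p.2.1 i)) =
        (fun q : X (i + k) × X (i + k) => (chainMap φ i k q.1, chainMap φ i k q.2)) ∘
          (fun p : InvLimit φ × InvLimit φ => (p.1.1 (i + k), p.2.1 (i + k))) := by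
      funext p
      simp [Function.comp, chainMap_thread]
    simp only [hF]
    rw [heq, ← Filter.comap_comap]
    exact Filter.comap_mono (Filter.tendsto_iff_comap.mp huc)
  have hdir : Directed (· ≥ ·) F := hanti.directed_ge
  have hset : {p : InvLimit φ × InvLimit φ |
      ∀ V ∈ uniformity (InvLimit φ), ∃ n : ℕ,
        ((InvLimit.map T hφT)^[n] p.1, (InvLimit.map T hφT)^[n] p.2) ∈ V} =
      ⋂ i, (fun p : InvLimit φ × InvLimit φ => (p.1.1 i, p.2.1 i)) ⁻¹'
        {q : X i × X i | ∀ ε > (0 : ℝ), ∃ n : ℕ,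
          dist ((T i)^[n] q.1) ((T i)^[n] q.2) < ε} := by
    ext p
    simp only [Set.mem_setOf_eq, Set.mem_iInter, Set.mem_preimage]
    constructor
    · intro h i ε hε
      have hV : {q : InvLimit φ × InvLimit φ | dist (q.1.1 i) (q.2.1 i) < ε} ∈
          uniformity (InvLimit φ) := by
        rw [hUnif]
        exact Filter.mem_iInf_of_mem i
          (Filter.preimage_mem_comap (Metric.dist_mem_uniformity hε))
      obtain ⟨n, hn⟩ := h _ hV
      refine ⟨n, ?_⟩
      simpa [map_iterate_coord] using hn
    · intro h V hV
      rw [hUnif, Filter.mem_iInf_of_directed hdir] at hV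
      obtain ⟨j, hVj⟩ := hV
      obtain ⟨U, hU, hUV⟩ := hVj
      obtain ⟨ε, hε, hball⟩ := Metric.mem_uniformity_dist.mp hU
      obtain ⟨n, hn⟩ := h j ε hε
      refine ⟨n, hUV ?_⟩
      show ((((InvLimit.map T hφT)^[n] p.1).1 j), (((InvLimit.map T hφT)^[n] p.2).1 j)) ∈ U
      exact hball (by simpa [map_iterate_coord] using hn)
  rw [hset]
  refine isClosed_iInter fun i => (hP i).preimage ?_
  exact (((continuous_apply i).comp (continuous_subtype_val.comp continuous_fst)).prodMk
    ((continuous_apply i).comp (continuous_subtype_val.comp continuous_snd)))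
end

section
/- Let (X,T) be a minimal system. Suppose there exist x,y ∈ X with (x,y) a distal pair, and points z_i → x with z_i ≠ x such that each (y, z_i) is proximal. Then (X,T) is strongly F_t-sensitive. -/
/-- Uniform-continuity modulus simultaneously for all iterates `T^[j]`, `j ≤ N`. -/
lemma unif_aux {X : Type*} [MetricSpace X] [CompactSpace X] (T : X → X) (hT : Continuous T)
    (ε : ℝ) (hε : 0 < ε) (N : ℕ) :
    ∃ ε' > (0 : ℝ), ∀ a b : X, dist a b < ε' → ∀ j ≤ N, dist (T^[j] a) (T^[j] b) < ε := by
  induction N with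
  | zero =>
    refine ⟨ε, hε, fun a b h j hj => ?_⟩
    interval_cases j
    simpa using h
  | succ N ih =>
    obtain ⟨ε₁, hε₁, h₁⟩ := ih
    have hu : UniformContinuous (T^[N + 1]) :=
      CompactSpace.uniformContinuous_of_continuous (hT.iterate (N + 1))
    obtain ⟨ε₂, hε₂, h₂⟩ := Metric.uniformContinuous_iff.mp hu ε hε
    refine ⟨min ε₁ ε₂, lt_min hε₁ hε₂, fun a b h j hj => ?_⟩
    rcases eq_or_lt_of_le hj with rfl | h'
    · exact h₂ (lt_of_lt_of_le h (min_le_right _ _))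
    · exact h₁ a b (lt_of_lt_of_le h (min_le_left _ _)) j (Nat.lt_succ_iff.mp h')

/-- Let `(X,T)` be minimal. If there is a distal pair `(x,y)` and points `z i → x`,
`z i ≠ x`, with each `(y, z i)` proximal, then `(X,T)` is strongly `F_t`-sensitive. -/
theorem strong_Ft_sensitive_of_distal_pair_approx {X : Type*} [MetricSpace X]
    [CompactSpace X] (T : X → X) (hT : Continuous T) (hTs : Function.Surjective T)
    (hmin : ∀ x : X, Dense (Set.range fun n : ℕ => T^[n] x))
    (x y : X) (hdistal : 0 < ⨅ n : ℕ, dist (T^[n] x) (T^[n] y))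
    (z : ℕ → X) (hz : Filter.Tendsto z Filter.atTop (nhds x)) (hzx : ∀ i, z i ≠ x)
    (hprox : ∀ i, ∀ ε > (0 : ℝ), ∃ n : ℕ, dist (T^[n] y) (T^[n] (z i)) < ε) :
    ∃ δ > (0 : ℝ), ∀ U : Set X, IsOpen U → U.Nonempty →
      ∃ z₁ ∈ U, ∃ z₂ ∈ U, IsThick {m : ℕ | δ < dist (T^[m] z₁) (T^[m] z₂)} := by
  set δ₀ := ⨅ n : ℕ, dist (T^[n] x) (T^[n] y) with hδ₀
  have hbdd : BddBelow (Set.range fun n : ℕ => dist (T^[n] x) (T^[n] y)) := by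
    refine ⟨0, ?_⟩
    rintro r ⟨n, rfl⟩
    exact dist_nonneg
  have hle : ∀ n : ℕ, δ₀ ≤ dist (T^[n] x) (T^[n] y) := fun n => ciInf_le hbdd n
  refine ⟨δ₀ / 2, by positivity, fun U hU hUne => ?_⟩
  obtain ⟨p, ⟨n₀, rfl⟩, hpU⟩ := (hmin x).exists_mem_open hU hUne
  have hopen : IsOpen ((fun a => T^[n₀] a) ⁻¹' U) := hU.preimage (hT.iterate n₀)
  have hxmem : x ∈ (fun a => T^[n₀] a) ⁻¹' U := hpU
  obtain ⟨i, hi⟩ := (hz.eventually (hopen.eventually_mem hxmem)).exists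
  refine ⟨T^[n₀] x, hpU, T^[n₀] (z i), hi, fun L => ?_⟩
  obtain ⟨ε', hε', hmod⟩ := unif_aux T hT (δ₀ / 4) (by positivity) (L + n₀)
  obtain ⟨n, hn⟩ := hprox i ε' hε'
  refine ⟨n, fun j hj => ?_⟩
  simp only [Set.mem_setOf_eq]
  rw [← Function.iterate_add_apply, ← Function.iterate_add_apply]
  have key : dist (T^[j + n₀] (T^[n] y)) (T^[j + n₀] (T^[n] (z i))) < δ₀ / 4 :=
    hmod _ _ hn (j + n₀) (by omega)
  rw [← Function.iterate_add_apply, ← Function.iterate_add_apply] at key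
  have h1 : δ₀ ≤ dist (T^[j + n₀ + n] x) (T^[j + n₀ + n] y) := hle _
  have htri : dist (T^[j + n₀ + n] x) (T^[j + n₀ + n] y) ≤
      dist (T^[j + n₀ + n] x) (T^[j + n₀ + n] (z i)) +
      dist (T^[j + n₀ + n] (z i)) (T^[j + n₀ + n] y) := dist_triangle _ _ _
  rw [dist_comm (T^[j + n₀ + n] (z i))] at htri
  have heq : n + j + n₀ = j + n₀ + n := by omega
  rw [heq]
  linarith
end

section
/- Let (X,T) be a minimal system such that the factor map π : X → X_eq onto the maximal equicontinuous factor is not proximal. Then there exists δ > 0 such that for every x ∈ X there exists y ∈ X with (x,y) regionally proximal and inf_{n ∈ ℤ≥0} d(Tⁿx, Tⁿy) > δ. -/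
/-- The regionally proximal relation of `(X,T)`. -/
def RegProx {X : Type*} [MetricSpace X] (T : X → X) : Set (X × X) :=
  {p : X × X | ∀ ε > (0 : ℝ), ∃ x' y' : X, ∃ n : ℕ,
    dist p.1 x' < ε ∧ dist p.2 y' < ε ∧ dist (T^[n] x') (T^[n] y') < ε}

lemma regProx_map {X : Type*} [MetricSpace X] [CompactSpace X] {T : X → X}
    (hT : Continuous T) {a b : X} (h : (a, b) ∈ RegProx T) :
    (T a, T b) ∈ RegProx T := by
  intro ε hε
  obtain ⟨η, hη, hηd⟩ := Metric.uniformContinuous_iff.mp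
    (CompactSpace.uniformContinuous_of_continuous hT) ε hε
  obtain ⟨x', y', n, h1, h2, h3⟩ := h (min η ε) (lt_min hη hε)
  refine ⟨T x', T y', n, hηd (lt_of_lt_of_le h1 (min_le_left _ _)),
    hηd (lt_of_lt_of_le h2 (min_le_left _ _)), ?_⟩
  rw [← Function.iterate_succ_apply, ← Function.iterate_succ_apply,
    Function.iterate_succ_apply', Function.iterate_succ_apply']
  exact hηd (lt_of_lt_of_le h3 (min_le_left _ _))

lemma regProx_iterate {X : Type*} [MetricSpace X] [CompactSpace X] {T : X → X}
    (hT : Continuous T) {a b : X} (h : (a, b) ∈ RegProx T) (m : ℕ) :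
    (T^[m] a, T^[m] b) ∈ RegProx T := by
  induction m with
  | zero => simpa using h
  | succ k ih =>
      rw [Function.iterate_succ_apply', Function.iterate_succ_apply']
      exact regProx_map hT ih

lemma regProx_limit {X : Type*} [MetricSpace X] {T : X → X}
    {u v : ℕ → X} {x y : X}
    (hmem : ∀ k, (u k, v k) ∈ RegProx T)
    (hu : Filter.Tendsto u Filter.atTop (nhds x))
    (hv : Filter.Tendsto v Filter.atTop (nhds y)) :
    (x, y) ∈ RegProx T := by
  intro ε hε
  have h2 : (0 : ℝ) < ε / 2 := by linarith
  obtain ⟨N1, hN1⟩ := (Metric.tendsto_atTop.mp hu) (ε / 2) h2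
  obtain ⟨N2, hN2⟩ := (Metric.tendsto_atTop.mp hv) (ε / 2) h2
  set k := max N1 N2
  obtain ⟨x', y', n, h1, h2', h3⟩ := hmem k (ε / 2) h2
  refine ⟨x', y', n, ?_, ?_, ?_⟩
  · calc dist x x' ≤ dist x (u k) + dist (u k) x' := dist_triangle _ _ _
      _ < ε / 2 + ε / 2 := by
          have := hN1 k (le_max_left _ _)
          rw [dist_comm] at this
          exact add_lt_add this h1
      _ = ε := by ring
  · calc dist y y' ≤ dist y (v k) + dist (v k) y' := dist_triangle _ _ _
      _ < ε / 2 + ε / 2 := by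
          have := hN2 k (le_max_right _ _)
          rw [dist_comm] at this
          exact add_lt_add this h2'
      _ = ε := by ring
  · linarith

/-- Let `(X,T)` be minimal and suppose the factor map onto the maximal equicontinuous
factor is not proximal (equivalently, since `R_π = Q(X)`, some regionally proximal pair
is not proximal).  Then there is `δ > 0` such that every `x` has a regionally proximal
partner `y` with `inf_n d(Tⁿx,Tⁿy) > δ`. -/
theorem regprox_nonproximal_partner {X : Type*} [MetricSpace X] [CompactSpace X]
    (T : X → X) (hT : Continuous T) (hTs : Function.Surjective T)
    (hmin : ∀ x : X, Dense (Set.range fun n : ℕ => T^[n] x))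
    (hnotprox : ¬ ∀ p ∈ RegProx T,
      ∀ ε > (0 : ℝ), ∃ n : ℕ, dist (T^[n] p.1) (T^[n] p.2) < ε) :
    ∃ δ > (0 : ℝ), ∀ x : X, ∃ y : X, (x, y) ∈ RegProx T ∧
      δ < ⨅ n : ℕ, dist (T^[n] x) (T^[n] y) := by
  push_neg at hnotprox
  obtain ⟨p, hp, ε₀, hε₀, hsep⟩ := hnotprox
  obtain ⟨z₁, z₂⟩ := p
  refine ⟨ε₀ / 2, by linarith, fun x => ?_⟩
  -- the orbit of z₁ is dense; approximate x
  have hx : x ∈ closure (Set.range fun n : ℕ => T^[n] z₁) := (hmin z₁) x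
  obtain ⟨w, hw, hwt⟩ := mem_closure_iff_seq_limit.mp hx
  choose m hm using hw
  -- extract a convergent subsequence of the second coordinates
  obtain ⟨y, -, φ, hφ, hvt⟩ := IsCompact.tendsto_subseq (x := fun k => T^[m k] z₂)
    isCompact_univ (fun k => Set.mem_univ _)
  refine ⟨y, ?_, ?_⟩
  · -- (x, y) is a limit of regionally proximal pairs
    refine regProx_limit (u := fun k => T^[m (φ k)] z₁) (v := fun k => T^[m (φ k)] z₂)
      (fun k => regProx_iterate hT hp _) ?_ hvt
    have : Filter.Tendsto (fun k => w (φ k)) Filter.atTop (nhds x) :=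
      hwt.comp hφ.tendsto_atTop
    simpa only [hm] using this
  · -- the infimum is at least ε₀
    have hlb : ∀ j : ℕ, ε₀ ≤ dist (T^[j] x) (T^[j] y) := by
      intro j
      have hcont : Continuous (T^[j]) := hT.iterate j
      have h1 : Filter.Tendsto (fun k => T^[j] (T^[m (φ k)] z₁)) Filter.atTop
          (nhds (T^[j] x)) := by
        apply (hcont.tendsto x).comp
        have : Filter.Tendsto (fun k => w (φ k)) Filter.atTop (nhds x) :=
          hwt.comp hφ.tendsto_atTop
        simpa only [hm] using this
      have h2 : Filter.Tendsto (fun k => T^[j] (T^[m (φ k)] z₂)) Filter.atTop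
          (nhds (T^[j] y)) := (hcont.tendsto y).comp hvt
      have hd : Filter.Tendsto
          (fun k => dist (T^[j] (T^[m (φ k)] z₁)) (T^[j] (T^[m (φ k)] z₂)))
          Filter.atTop (nhds (dist (T^[j] x) (T^[j] y))) := h1.dist h2
      refine le_of_tendsto_of_tendsto tendsto_const_nhds hd
        (Filter.Eventually.of_forall fun k => ?_)
      have := hsep (j + m (φ k))
      rw [Function.iterate_add_apply, Function.iterate_add_apply] at this
      simpa using this
    have : ε₀ ≤ ⨅ n : ℕ, dist (T^[n] x) (T^[n] y) := le_ciInf hlb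
    linarith
end
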